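/- arXiv:math/0507338 — 3 statements merged into one kernel-verified Lean document; each statement's English description precedes it below -/
import Mathlib

section
/- For a fixed n ≥ 1, the double sum over 1 ≤ i_1 < ... < i_{n-1} ≤ n and over π ∈ S_n with π(i_1) < ... < π(i_{n-1}) of sgn(π) equals 1 when n is odd and 0 when n is even. -/
open scoped Classical

lemma exists_eq_succAbove {m : ℕ} {f : Fin m → Fin (m + 1)} (hf : StrictMono f) :
    ∃ a : Fin (m + 1), f = a.succAbove := by
  have hinj : Function.Injective f := hf.injective
  have hcard : (Finset.univ.image f).card = m := by
    rw [Finset.card_image_of_injective _ hinj, Finset.card_univ, Fintype.card_fin]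
  have hne : ((Finset.univ.image f)ᶜ : Finset (Fin (m + 1))).Nonempty := by
    rw [← Finset.card_pos, Finset.card_compl, hcard, Fintype.card_fin]
    omega
  obtain ⟨a, ha⟩ := hne
  have himg : Finset.univ.image f = ({a} : Finset (Fin (m + 1)))ᶜ := by
    apply Finset.eq_of_subset_of_card_le
    · intro x hx
      simp only [Finset.mem_compl, Finset.mem_singleton]
      rintro rfl
      exact (Finset.mem_compl.mp ha) hx
    · rw [Finset.card_compl, hcard, Finset.card_singleton, Fintype.card_fin]
      omega
  have hr : Set.range f = Set.range a.succAbove := by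
    rw [Fin.range_succAbove, ← Set.image_univ, ← Finset.coe_univ, ← Finset.coe_image, himg]
    simp
  haveI : WellFoundedLT (Fin m) := inferInstance
  exact ⟨a, (StrictMono.range_inj hf (Fin.strictMono_succAbove a)).mp hr⟩

/-- The permutation sending `a` to `b` and increasing on the complement. -/
def sigmaAB {m : ℕ} (a b : Fin (m + 1)) : Equiv.Perm (Fin (m + 1)) :=
  (Fin.cycleRange b)⁻¹ * Fin.cycleRange a

lemma sigmaAB_apply_self {m : ℕ} (a b : Fin (m + 1)) : sigmaAB a b a = b := by
  simp [sigmaAB, Fin.cycleRange_self, ← Equiv.Perm.eq_inv_iff_eq]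

lemma sigmaAB_succAbove {m : ℕ} (a b : Fin (m + 1)) (j : Fin m) :
    sigmaAB a b (a.succAbove j) = b.succAbove j := by
  simp only [sigmaAB, Equiv.Perm.mul_apply, Fin.cycleRange_succAbove]
  exact Fin.cycleRange_symm_succ b j

lemma sign_sigmaAB {m : ℕ} (a b : Fin (m + 1)) :
    (Equiv.Perm.sign (sigmaAB a b) : ℤ) = (-1) ^ (a : ℕ) * (-1) ^ (b : ℕ) := by
  simp [sigmaAB, Fin.sign_cycleRange, mul_comm]

lemma eq_sigmaAB {m : ℕ} {a c : Fin (m + 1)} {τ : Equiv.Perm (Fin (m + 1))}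
    (hc : ∀ j, τ (a.succAbove j) = c.succAbove j) : τ a = c ∧ τ = sigmaAB a c := by
  have hca : τ a = c := by
    by_contra hne
    obtain ⟨j, hj⟩ := Fin.exists_succAbove_eq hne
    have : τ (a.succAbove j) = τ a := by rw [hc j, hj]
    exact Fin.succAbove_ne a j (τ.injective this)
  refine ⟨hca, ?_⟩
  ext x
  rcases eq_or_ne x a with rfl | hx
  · rw [hca, sigmaAB_apply_self]
  · obtain ⟨j, rfl⟩ := Fin.exists_succAbove_eq hx
    rw [hc j, sigmaAB_succAbove]

lemma stmt3aux (m : ℕ) :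
    ∑ i ∈ Finset.univ.filter (fun i : Fin m → Fin (m + 1) => StrictMono i),
      ∑ π ∈ Finset.univ.filter
          (fun π : Equiv.Perm (Fin (m + 1)) => StrictMono (fun s => π (i s))),
        (Equiv.Perm.sign π : ℤ) =
      if Odd (m + 1) then 1 else 0 := by
  have houter :
      ∑ i ∈ Finset.univ.filter (fun i : Fin m → Fin (m + 1) => StrictMono i),
        ∑ π ∈ Finset.univ.filter
            (fun π : Equiv.Perm (Fin (m + 1)) => StrictMono (fun s => π (i s))),
          (Equiv.Perm.sign π : ℤ) =
      ∑ a : Fin (m + 1),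
        ∑ π ∈ Finset.univ.filter
            (fun π : Equiv.Perm (Fin (m + 1)) => StrictMono (fun s => π (a.succAbove s))),
          (Equiv.Perm.sign π : ℤ) := by
    refine (Finset.sum_bij (fun a _ => Fin.succAbove a) ?_ ?_ ?_ ?_).symm
    · intro a _
      simp [Finset.mem_filter, Fin.strictMono_succAbove a]
    · intro a _ b _ h
      exact Fin.succAbove_left_injective h
    · intro i hi
      simp only [Finset.mem_filter, Finset.mem_univ, true_and] at hi
      obtain ⟨a, rfl⟩ := exists_eq_succAbove hi
      exact ⟨a, Finset.mem_univ a, rfl⟩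
    · intro a _; rfl
  rw [houter]
  have hinner : ∀ a : Fin (m + 1),
      ∑ π ∈ Finset.univ.filter
          (fun π : Equiv.Perm (Fin (m + 1)) => StrictMono (fun s => π (a.succAbove s))),
        (Equiv.Perm.sign π : ℤ) =
      ∑ b : Fin (m + 1), (-1 : ℤ) ^ (a : ℕ) * (-1) ^ (b : ℕ) := by
    intro a
    refine Finset.sum_bij (fun π _ => π a) ?_ ?_ ?_ ?_
    · intro π _; exact Finset.mem_univ _
    · intro π hπ ρ hρ h
      simp only [Finset.mem_filter, Finset.mem_univ, true_and] at hπ hρ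
      obtain ⟨c, hc⟩ := exists_eq_succAbove hπ
      obtain ⟨d, hd⟩ := exists_eq_succAbove hρ
      obtain ⟨hπa, hπeq⟩ := eq_sigmaAB (fun j => congrFun hc j)
      obtain ⟨hρa, hρeq⟩ := eq_sigmaAB (fun j => congrFun hd j)
      have h' : π a = ρ a := h
      rw [hπa, hρa] at h'
      rw [hπeq, hρeq, h']
    · intro b _
      refine ⟨sigmaAB a b, ?_, sigmaAB_apply_self a b⟩
      simp only [Finset.mem_filter, Finset.mem_univ, true_and]
      have : (fun s => sigmaAB a b (a.succAbove s)) = b.succAbove := by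
        funext j; exact sigmaAB_succAbove a b j
      rw [this]
      exact Fin.strictMono_succAbove b
    · intro π hπ
      simp only [Finset.mem_filter, Finset.mem_univ, true_and] at hπ
      obtain ⟨c, hc⟩ := exists_eq_succAbove hπ
      obtain ⟨hπa, hπeq⟩ := eq_sigmaAB (fun j => congrFun hc j)
      show (Equiv.Perm.sign π : ℤ) = (-1) ^ (a : ℕ) * (-1) ^ ((π a : Fin (m + 1)) : ℕ)
      rw [hπa, hπeq, sign_sigmaAB]
  simp only [hinner]
  have hS : ∑ a : Fin (m + 1), (-1 : ℤ) ^ (a : ℕ) =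
      if Even (m + 1) then 0 else 1 := by
    rw [Fin.sum_univ_eq_sum_range (fun k => (-1 : ℤ) ^ k), neg_one_geom_sum]
  rw [← Finset.sum_mul_sum, hS]
  rcases Nat.even_or_odd (m + 1) with h | h
  · simp [h, Nat.not_odd_iff_even.mpr h]
  · simp [h, Nat.not_even_iff_odd.mpr h]

/-- The double sum over all `(n-1)`-element position sets and all permutations
increasing on those positions of the sign equals `1` if `n` is odd and `0` if even. -/
theorem stmt3 (n : ℕ) (hn : 1 ≤ n) :
    ∑ i ∈ Finset.univ.filter (fun i : Fin (n - 1) → Fin n => StrictMono i),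
      ∑ π ∈ Finset.univ.filter
          (fun π : Equiv.Perm (Fin n) => StrictMono (fun s => π (i s))),
        (Equiv.Perm.sign π : ℤ) =
      if Odd n then 1 else 0 := by
  obtain ⟨m, rfl⟩ : ∃ m, n = m + 1 := ⟨n - 1, (Nat.succ_pred_eq_of_pos hn).symm⟩
  exact stmt3aux m
end

section
/- Let α be a fixed partition and n an even positive integer. Then Σ_{λ : λ ⊇ α, |λ/α| = n} (−1)^{v(λ)} I_{λ/α}² = Σ_{μ : μ ⊆ α, |α/μ| = n} (−1)^{v(μ)} I_{α/μ}². -/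
open scoped Classical

/-- Cells of the skew shape `lam / μ`. -/
def cellsOf (μ lam : YoungDiagram) : Finset (ℕ × ℕ) := lam.cells \ μ.cells

/-- `f` is (the entry function of) a standard Young tableau of skew shape `lam / μ`,
with entries `1, …, n` and `f x = 0` off the shape. -/
def IsSkewSYT (μ lam : YoungDiagram) (f : ℕ × ℕ → ℕ) : Prop :=
  (∀ x, x ∉ cellsOf μ lam → f x = 0) ∧
  Set.BijOn f (cellsOf μ lam) (Set.Icc 1 (cellsOf μ lam).card) ∧
  ∀ x ∈ cellsOf μ lam, ∀ y ∈ cellsOf μ lam,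
    ((x.1 = y.1 ∧ x.2 < y.2) ∨ (x.2 = y.2 ∧ x.1 < y.1)) → f x < f y

/-- The sign of the row-reading word (book order) of a filling `f` of `lam / μ`:
`(-1)` to the number of inversions. -/
noncomputable def tabSign {β : Type*} [LinearOrder β] (μ lam : YoungDiagram)
    (f : ℕ × ℕ → β) : ℤ :=
  (-1) ^ (((cellsOf μ lam) ×ˢ (cellsOf μ lam)).filter
    (fun p => (p.1.1 < p.2.1 ∨ (p.1.1 = p.2.1 ∧ p.1.2 < p.2.2)) ∧ f p.2 < f p.1)).card

/-- The sign-imbalance `I_{lam/μ}`. -/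
noncomputable def imb (μ lam : YoungDiagram) : ℤ :=
  ∑ᶠ f ∈ {f : ℕ × ℕ → ℕ | IsSkewSYT μ lam f}, tabSign μ lam f

/-- `S` records the top cells of a set of pairwise disjoint vertical dominoes in `lam`. -/
def IsVDominoSet (lam : YoungDiagram) (S : Finset (ℕ × ℕ)) : Prop :=
  (∀ p ∈ S, p ∈ lam ∧ (p.1 + 1, p.2) ∈ lam) ∧
  (S : Set (ℕ × ℕ)).PairwiseDisjoint
    (fun p => ({p, (p.1 + 1, p.2)} : Finset (ℕ × ℕ)))

/-- `v(lam)`: the maximal number of disjoint vertical dominoes fitting inside `lam`. -/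
noncomputable def vDom (lam : YoungDiagram) : ℕ :=
  sSup {k | ∃ S : Finset (ℕ × ℕ), IsVDominoSet lam S ∧ S.card = k}

/-!
On the free `ℤ`-module spanned by Young diagrams let `U` add a cell at the end of row `r` with
sign `(-1) ^ (number of cells below row r)` and `D` remove one with the extra sign `(-1) ^ r`.
Then `DU + UD = 1`: on the diagonal the addable and removable rows contribute the alternating sum
`∑ (-1) ^ r = 1`, and off the diagonal adding in row `r` and removing in row `s` can be done in
either order, the two orders differing by one cell below. Hence `D` commutes with `U²`, and
`Dⁿ Uⁿ = Uⁿ Dⁿ` for even `n`.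

Removing the cell holding the largest entry of a standard tableau of shape `λ/α` leaves one of a
shape with a corner removed, and multiplies the sign of the reading word by `-1` to the number of
cells of `λ/α` below that corner. So `I_{λ/α}` is, up to a sign depending only on `α` and `λ`,
the coefficient of `λ` in `Uⁿ α`. Since `v(λ) = ∑_j ⌊λ'_j / 2⌋`, adding a cell in row `r` changes
`v` by `r mod 2`, which makes `D` adjoint to `U` for the pairing `⟨λ, μ⟩ = (-1) ^ v(λ) δ_{λμ}`.
The two sides of the identity are then `⟨Uⁿ α, Uⁿ α⟩ = ⟨α, Dⁿ Uⁿ α⟩ = ⟨α, Uⁿ Dⁿ α⟩ = ⟨Dⁿ α, Dⁿ α⟩`.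
-/

open Finset

/-! ### Adding and removing a cell -/

namespace YoungDiagram

variable {μ : YoungDiagram} {r s : ℕ}

theorem rowLen_eq_of_forall_mem_iff {i n : ℕ} (h : ∀ j, (i, j) ∈ μ ↔ j < n) :
    μ.rowLen i = n :=
  eq_of_forall_lt_iff fun j => by rw [← mem_iff_lt_rowLen, h]

theorem colLen_eq_of_forall_mem_iff {j n : ℕ} (h : ∀ i, (i, j) ∈ μ ↔ i < n) :
    μ.colLen j = n :=
  eq_of_forall_lt_iff fun i => by rw [← mem_iff_lt_colLen, h]

theorem ext_rowLen {μ ν : YoungDiagram} (h : ∀ i, μ.rowLen i = ν.rowLen i) : μ = ν :=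
  SetLike.ext fun ⟨i, j⟩ => by rw [mem_iff_lt_rowLen, mem_iff_lt_rowLen, h]

theorem eq_of_le_of_card_le {μ ν : YoungDiagram} (hle : μ ≤ ν) (hcard : ν.card ≤ μ.card) :
    μ = ν :=
  YoungDiagram.ext (eq_of_subset_of_card_le (cells_subset_iff.mpr hle) hcard)

theorem rowLen_le_card (μ : YoungDiagram) (i : ℕ) : μ.rowLen i ≤ μ.card := by
  rw [rowLen_eq_card]
  exact card_le_card fun x hx => (mem_row_iff.mp hx).1

theorem colLen_le_card (μ : YoungDiagram) (j : ℕ) : μ.colLen j ≤ μ.card := by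
  rw [colLen_eq_card]
  exact card_le_card fun x hx => (mem_col_iff.mp hx).1

def IsAddableRow (μ : YoungDiagram) (r : ℕ) : Prop := r = 0 ∨ μ.rowLen r < μ.rowLen (r - 1)

def IsRemovableRow (μ : YoungDiagram) (r : ℕ) : Prop := μ.rowLen (r + 1) < μ.rowLen r

theorem isAddableRow_zero (μ : YoungDiagram) : μ.IsAddableRow 0 := Or.inl rfl

theorem isAddableRow_succ_iff : μ.IsAddableRow (r + 1) ↔ μ.IsRemovableRow r := by
  simp [IsAddableRow, IsRemovableRow]

theorem IsAddableRow.le_card (h : μ.IsAddableRow r) : r ≤ μ.card := by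
  rcases h with rfl | h
  · exact Nat.zero_le _
  · have : r - 1 < μ.colLen 0 := by
      rw [← mem_iff_lt_colLen, mem_iff_lt_rowLen]; omega
    have := μ.colLen_le_card 0
    omega

theorem IsRemovableRow.lt_card (h : μ.IsRemovableRow r) : r < μ.card := by
  have : r < μ.colLen 0 := by
    rw [← mem_iff_lt_colLen, mem_iff_lt_rowLen]; exact Nat.zero_lt_of_lt h
  exact this.trans_le (μ.colLen_le_card 0)

abbrev addedCell (μ : YoungDiagram) (r : ℕ) : ℕ × ℕ := (r, μ.rowLen r)

abbrev corner (μ : YoungDiagram) (r : ℕ) : ℕ × ℕ := (r, μ.rowLen r - 1)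

theorem addedCell_notMem (μ : YoungDiagram) (r : ℕ) : μ.addedCell r ∉ μ := by
  simp [mem_iff_lt_rowLen]

theorem IsRemovableRow.corner_mem (h : μ.IsRemovableRow r) : μ.corner r ∈ μ := by
  rw [mem_iff_lt_rowLen]; unfold IsRemovableRow at h; omega

theorem IsAddableRow.isLowerSet_insert (h : μ.IsAddableRow r) :
    IsLowerSet (↑(insert (μ.addedCell r) μ.cells) : Set (ℕ × ℕ)) := by
  rintro ⟨a, b⟩ ⟨i, j⟩ hle hab
  obtain ⟨hi, hj⟩ := Prod.mk_le_mk.mp hle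
  simp only [coe_insert, Set.mem_insert_iff, mem_coe, mem_cells, Prod.mk.injEq,
    mem_iff_lt_rowLen] at hab ⊢
  have := μ.rowLen_anti i a hi
  rcases hab with ⟨rfl, rfl⟩ | hab
  · rcases hi.eq_or_lt with rfl | hi
    · omega
    · have := μ.rowLen_anti i (a - 1) (by omega)
      rcases h with rfl | h <;> omega
  · omega

theorem IsRemovableRow.isLowerSet_erase (h : μ.IsRemovableRow r) :
    IsLowerSet (↑(μ.cells.erase (μ.corner r)) : Set (ℕ × ℕ)) := by
  rintro ⟨a, b⟩ ⟨i, j⟩ hle hab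
  obtain ⟨hne, hab⟩ := mem_erase.mp hab
  obtain ⟨hi, hj⟩ := Prod.mk_le_mk.mp hle
  refine mem_erase.mpr ⟨?_, μ.isLowerSet hle hab⟩
  rintro ⟨⟩
  rw [mem_cells, mem_iff_lt_rowLen] at hab
  unfold IsRemovableRow at h
  rcases hi.eq_or_lt with rfl | hi
  · exact hne (Prod.ext rfl (by dsimp only; omega))
  · have := μ.rowLen_anti (r + 1) a hi
    omega

/-- Junk value `μ` if `r` is not addable. -/
noncomputable def addCell (μ : YoungDiagram) (r : ℕ) : YoungDiagram :=
  if h : μ.IsAddableRow r then ⟨insert (μ.addedCell r) μ.cells, h.isLowerSet_insert⟩ else μ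

/-- Junk value `μ` if `r` is not removable. -/
noncomputable def removeCell (μ : YoungDiagram) (r : ℕ) : YoungDiagram :=
  if h : μ.IsRemovableRow r then ⟨μ.cells.erase (μ.corner r), h.isLowerSet_erase⟩ else μ

theorem IsAddableRow.cells_addCell (h : μ.IsAddableRow r) :
    (μ.addCell r).cells = insert (μ.addedCell r) μ.cells := by
  rw [addCell, dif_pos h]

theorem IsRemovableRow.cells_removeCell (h : μ.IsRemovableRow r) :
    (μ.removeCell r).cells = μ.cells.erase (μ.corner r) := by
  rw [removeCell, dif_pos h]

theorem IsAddableRow.mem_addCell (h : μ.IsAddableRow r) {x : ℕ × ℕ} :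
    x ∈ μ.addCell r ↔ x = μ.addedCell r ∨ x ∈ μ := by
  rw [← mem_cells, h.cells_addCell, mem_insert, mem_cells]

theorem IsRemovableRow.mem_removeCell (h : μ.IsRemovableRow r) {x : ℕ × ℕ} :
    x ∈ μ.removeCell r ↔ x ≠ μ.corner r ∧ x ∈ μ := by
  rw [← mem_cells, h.cells_removeCell, mem_erase, mem_cells]

theorem IsAddableRow.rowLen_addCell (h : μ.IsAddableRow r) (i : ℕ) :
    (μ.addCell r).rowLen i = μ.rowLen i + if i = r then 1 else 0 := by
  refine rowLen_eq_of_forall_mem_iff fun j => ?_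
  rw [h.mem_addCell, mem_iff_lt_rowLen, Prod.mk.injEq]
  rcases eq_or_ne i r with rfl | hi
  · simp only [true_and, if_true]; omega
  · simp only [hi, false_and, false_or, if_false, add_zero]

theorem IsRemovableRow.rowLen_removeCell (h : μ.IsRemovableRow r) (i : ℕ) :
    (μ.removeCell r).rowLen i + (if i = r then 1 else 0) = μ.rowLen i := by
  have hpos : 0 < μ.rowLen r := Nat.zero_lt_of_lt h
  suffices (μ.removeCell r).rowLen i = μ.rowLen i - if i = r then 1 else 0 by
    split_ifs at this ⊢ with hi
    · subst hi; omega
    · omega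
  refine rowLen_eq_of_forall_mem_iff fun j => ?_
  rw [h.mem_removeCell, mem_iff_lt_rowLen, Ne, Prod.mk.injEq]
  rcases eq_or_ne i r with rfl | hi
  · simp only [true_and, if_true]; omega
  · simp only [hi, false_and, not_false_eq_true, true_and, if_false, Nat.sub_zero]

theorem IsAddableRow.isRemovableRow_addCell (h : μ.IsAddableRow r) :
    (μ.addCell r).IsRemovableRow r := by
  unfold IsRemovableRow
  rw [h.rowLen_addCell, h.rowLen_addCell, if_pos rfl, if_neg r.succ_ne_self]
  have := μ.rowLen_anti r (r + 1) r.le_succ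
  omega

theorem IsRemovableRow.isAddableRow_removeCell (h : μ.IsRemovableRow r) :
    (μ.removeCell r).IsAddableRow r := by
  rcases Nat.eq_zero_or_pos r with rfl | hr
  · exact isAddableRow_zero _
  · have h₁ := h.rowLen_removeCell r
    have h₂ := h.rowLen_removeCell (r - 1)
    have := μ.rowLen_anti (r - 1) r (Nat.sub_le r 1)
    unfold IsRemovableRow at h
    right
    split_ifs at h₁ h₂ <;> omega

theorem IsAddableRow.removeCell_addCell (h : μ.IsAddableRow r) :
    (μ.addCell r).removeCell r = μ :=
  ext_rowLen fun i => by
    have := h.isRemovableRow_addCell.rowLen_removeCell i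
    rw [h.rowLen_addCell] at this
    omega

theorem IsRemovableRow.addCell_removeCell (h : μ.IsRemovableRow r) :
    (μ.removeCell r).addCell r = μ :=
  ext_rowLen fun i => by
    have := h.rowLen_removeCell i
    rw [h.isAddableRow_removeCell.rowLen_addCell]
    omega

theorem isAddableRow_and_addCell_eq_iff {ν τ : YoungDiagram} :
    (ν.IsAddableRow r ∧ ν.addCell r = τ) ↔ (τ.IsRemovableRow r ∧ τ.removeCell r = ν) := by
  constructor
  · rintro ⟨h, rfl⟩
    exact ⟨h.isRemovableRow_addCell, h.removeCell_addCell⟩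
  · rintro ⟨h, rfl⟩
    exact ⟨h.isAddableRow_removeCell, h.addCell_removeCell⟩

theorem IsAddableRow.card_addCell (h : μ.IsAddableRow r) : (μ.addCell r).card = μ.card + 1 := by
  rw [YoungDiagram.card, h.cells_addCell,
    card_insert_of_notMem (by simpa using μ.addedCell_notMem r)]

theorem IsRemovableRow.card_removeCell (h : μ.IsRemovableRow r) :
    (μ.removeCell r).card + 1 = μ.card := by
  simpa [h.addCell_removeCell] using h.isAddableRow_removeCell.card_addCell.symm

theorem le_addCell (μ : YoungDiagram) (r : ℕ) : μ ≤ μ.addCell r := by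
  unfold addCell
  split_ifs
  · exact fun x hx => mem_insert_of_mem hx
  · exact le_rfl

theorem removeCell_le (μ : YoungDiagram) (r : ℕ) : μ.removeCell r ≤ μ := by
  unfold removeCell
  split_ifs
  · exact fun x hx => mem_of_mem_erase hx
  · exact le_rfl

theorem isAddableRow_and_isRemovableRow_addCell_iff (hrs : r ≠ s) :
    (μ.IsAddableRow r ∧ (μ.addCell r).IsRemovableRow s) ↔
      (μ.IsRemovableRow s ∧ (μ.removeCell s).IsAddableRow r) := by
  rcases r with _ | r
  · have e := μ.isAddableRow_zero.rowLen_addCell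
    simp only [isAddableRow_zero, true_and, and_true, IsRemovableRow]
    rw [e, e, if_neg (by omega), if_neg hrs.symm, add_zero, add_zero]
  simp only [isAddableRow_succ_iff]
  constructor
  · rintro ⟨ha, hb⟩
    have e := (isAddableRow_succ_iff.mpr ha).rowLen_addCell
    unfold IsRemovableRow at ha hb
    rw [e, e] at hb
    have hs : μ.IsRemovableRow s := by unfold IsRemovableRow; split_ifs at hb <;> omega
    have h₁ := hs.rowLen_removeCell r
    have h₂ := hs.rowLen_removeCell (r + 1)
    refine ⟨hs, ?_⟩
    unfold IsRemovableRow at hs ⊢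
    split_ifs at * <;> subst_vars <;> omega
  · rintro ⟨hs, hr⟩
    have h₁ := hs.rowLen_removeCell r
    have h₂ := hs.rowLen_removeCell (r + 1)
    have ha : μ.IsRemovableRow r := by
      unfold IsRemovableRow at hr ⊢; split_ifs at * <;> subst_vars <;> omega
    have e := (isAddableRow_succ_iff.mpr ha).rowLen_addCell
    refine ⟨ha, ?_⟩
    unfold IsRemovableRow at hs hr ha ⊢
    rw [e, e]
    split_ifs at * <;> subst_vars <;> omega

theorem removeCell_addCell_comm (hrs : r ≠ s) (ha : μ.IsAddableRow r)
    (hb : (μ.addCell r).IsRemovableRow s) :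
    (μ.addCell r).removeCell s = (μ.removeCell s).addCell r := by
  obtain ⟨hs, hr⟩ := (isAddableRow_and_isRemovableRow_addCell_iff hrs).mp ⟨ha, hb⟩
  refine ext_rowLen fun i => ?_
  have h₁ := hb.rowLen_removeCell i
  have h₂ := hs.rowLen_removeCell i
  rw [ha.rowLen_addCell] at h₁
  rw [hr.rowLen_addCell]
  split_ifs at h₁ h₂ ⊢ <;> omega

def cellsBelow (μ : YoungDiagram) (r : ℕ) : ℕ := #{c ∈ μ.cells | r < c.1}

theorem IsAddableRow.cellsBelow_addCell (h : μ.IsAddableRow r) (s : ℕ) :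
    (μ.addCell r).cellsBelow s = μ.cellsBelow s + if s < r then 1 else 0 := by
  unfold cellsBelow
  rw [h.cells_addCell, filter_insert]
  split_ifs with hs
  · exact card_insert_of_notMem fun hc => μ.addedCell_notMem r (by simpa using (mem_filter.mp hc).1)
  · rfl

theorem IsRemovableRow.cellsBelow_removeCell (h : μ.IsRemovableRow r) (s : ℕ) :
    (μ.removeCell r).cellsBelow s + (if s < r then 1 else 0) = μ.cellsBelow s := by
  rw [← h.isAddableRow_removeCell.cellsBelow_addCell, h.addCell_removeCell]

theorem IsAddableRow.cellsBelow_addCell_self (h : μ.IsAddableRow r) :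
    (μ.addCell r).cellsBelow r = μ.cellsBelow r := by
  simp [h.cellsBelow_addCell]

theorem IsRemovableRow.cellsBelow_removeCell_self (h : μ.IsRemovableRow r) :
    (μ.removeCell r).cellsBelow r = μ.cellsBelow r := by
  simpa using h.cellsBelow_removeCell r

noncomputable def addableRows (μ : YoungDiagram) : Finset ℕ :=
  {r ∈ range (μ.card + 1) | μ.IsAddableRow r}

noncomputable def removableRows (μ : YoungDiagram) : Finset ℕ :=
  {r ∈ range μ.card | μ.IsRemovableRow r}

theorem mem_addableRows : r ∈ μ.addableRows ↔ μ.IsAddableRow r := by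
  simpa [addableRows] using fun h => Nat.lt_succ_of_le h.le_card

theorem mem_removableRows : r ∈ μ.removableRows ↔ μ.IsRemovableRow r := by
  simpa [removableRows] using IsRemovableRow.lt_card

theorem sum_addableRows_eq_sum_range {M : Type*} [AddCommMonoid M] {N : ℕ} (hN : μ.card < N)
    (g : ℕ → M) :
    ∑ r ∈ μ.addableRows, g r = ∑ r ∈ range N, if μ.IsAddableRow r then g r else 0 := by
  rw [← sum_filter]
  congr 1
  ext r
  simpa [mem_addableRows] using fun h => h.le_card.trans_lt hN

theorem sum_removableRows_eq_sum_range {M : Type*} [AddCommMonoid M] {N : ℕ} (hN : μ.card < N)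
    (g : ℕ → M) :
    ∑ r ∈ μ.removableRows, g r = ∑ r ∈ range N, if μ.IsRemovableRow r then g r else 0 := by
  rw [← sum_filter]
  congr 1
  ext r
  simpa [mem_removableRows] using fun h => h.lt_card.trans hN

/-- Addable and removable rows alternate, starting and ending with an addable one. -/
theorem sum_addableRows_add_sum_removableRows (μ : YoungDiagram) :
    ∑ r ∈ μ.addableRows, (-1 : ℤ) ^ r + ∑ r ∈ μ.removableRows, (-1 : ℤ) ^ r = 1 := by
  rw [sum_addableRows_eq_sum_range (Nat.lt_succ_self _),
    sum_removableRows_eq_sum_range (Nat.lt_succ_self _), sum_range_succ', sum_range_succ,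
    if_pos μ.isAddableRow_zero, if_neg fun h => (h.lt_card).false]
  have : ∀ r, (if μ.IsAddableRow (r + 1) then (-1 : ℤ) ^ (r + 1) else 0) =
      -if μ.IsRemovableRow r then (-1) ^ r else 0 := fun r => by
    rw [isAddableRow_succ_iff, pow_succ]; split_ifs <;> ring
  simp only [this, sum_neg_distrib]
  ring

/-! ### Vertical dominoes -/

theorem IsAddableRow.colLen_rowLen (h : μ.IsAddableRow r) : μ.colLen (μ.rowLen r) = r := by
  refine colLen_eq_of_forall_mem_iff fun i => ?_
  rw [mem_iff_lt_rowLen]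
  constructor
  · intro hi
    by_contra! hri
    have := μ.rowLen_anti r i hri
    omega
  · intro hi
    rcases h with rfl | h
    · omega
    · have := μ.rowLen_anti i (r - 1) (by omega)
      omega

theorem IsAddableRow.colLen_addCell (h : μ.IsAddableRow r) (j : ℕ) :
    (μ.addCell r).colLen j = μ.colLen j + if j = μ.rowLen r then 1 else 0 := by
  refine colLen_eq_of_forall_mem_iff fun i => ?_
  rw [h.mem_addCell, mem_iff_lt_colLen, Prod.mk.injEq]
  rcases eq_or_ne j (μ.rowLen r) with rfl | hj
  · simp only [and_true, if_true, h.colLen_rowLen]; omega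
  · simp only [hj, and_false, false_or, if_false, add_zero]

end YoungDiagram

open YoungDiagram

theorem IsVDominoSet.card_le_sum_colLen {lam : YoungDiagram} {S : Finset (ℕ × ℕ)}
    (hS : IsVDominoSet lam S) {M : ℕ} (hM : lam.rowLen 0 ≤ M) :
    #S ≤ ∑ j ∈ range M, lam.colLen j / 2 := by
  have hcol : ∀ p ∈ S, p.2 ∈ range M := fun p hp => by
    have := mem_iff_lt_rowLen.mp (hS.1 p hp).1
    have := lam.rowLen_anti 0 p.1 (Nat.zero_le _)
    exact mem_range.mpr (by omega)
  rw [card_eq_sum_card_fiberwise hcol]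
  refine sum_le_sum fun j _ => ?_
  -- disjoint dominoes in one column have top rows at distance at least 2
  calc #{p ∈ S | p.2 = j} ≤ #(range (lam.colLen j / 2)) := by
        refine card_le_card_of_injOn (fun p => p.1 / 2) (fun p hp => ?_) (fun p hp q hq hpq => ?_)
        · obtain ⟨hpS, rfl⟩ := mem_filter.mp hp
          have := mem_iff_lt_colLen.mp (hS.1 p hpS).2
          simp only [coe_range, Set.mem_Iio]
          omega
        · obtain ⟨hpS, hpj⟩ := mem_filter.mp hp
          obtain ⟨hqS, hqj⟩ := mem_filter.mp hq
          by_contra hne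
          have hd := disjoint_left.mp (hS.2 hpS hqS hne)
          have hp2 : p.2 = q.2 := hpj.trans hqj.symm
          have h₁ : p.1 ≠ q.1 := fun h => hne (Prod.ext h hp2)
          have h₂ : p.1 ≠ q.1 + 1 := fun h => hd (mem_insert_self p _)
            (by rw [mem_insert, mem_singleton]; exact Or.inr (Prod.ext h hp2))
          have h₃ : p.1 + 1 ≠ q.1 := fun h => hd (mem_insert_of_mem (mem_singleton_self _))
            (by rw [mem_insert]; exact Or.inl (Prod.ext h hp2))
          simp only at hpq
          omega
    _ = lam.colLen j / 2 := card_range _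

def stackedDominoes (lam : YoungDiagram) (M : ℕ) : Finset (ℕ × ℕ) :=
  (range M).biUnion fun j => (range (lam.colLen j / 2)).image fun m => (2 * m, j)

theorem isVDominoSet_stackedDominoes (lam : YoungDiagram) (M : ℕ) :
    IsVDominoSet lam (stackedDominoes lam M) := by
  have hmem : ∀ {p}, p ∈ stackedDominoes lam M →
      ∃ m j, 2 * m + 1 < lam.colLen j ∧ p = (2 * m, j) := by
    intro p hp
    simp only [stackedDominoes, mem_biUnion, mem_image, mem_range] at hp
    obtain ⟨j, -, m, hm, rfl⟩ := hp
    exact ⟨m, j, by omega, rfl⟩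
  refine ⟨fun p hp => ?_, fun p hp q hq hne => ?_⟩
  · obtain ⟨m, j, hm, rfl⟩ := hmem hp
    exact ⟨mem_iff_lt_colLen.mpr (by omega), mem_iff_lt_colLen.mpr hm⟩
  · obtain ⟨m, j, -, rfl⟩ := hmem hp
    obtain ⟨m', j', -, rfl⟩ := hmem hq
    rw [Function.onFun, disjoint_left]
    intro x hx hx'
    simp only [mem_insert, mem_singleton] at hx hx'
    rcases hx with rfl | rfl <;> rcases hx' with h | h <;> simp only [Prod.mk.injEq] at h <;>
      first | omega | exact hne (by simp only [Prod.mk.injEq]; omega)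

theorem card_stackedDominoes (lam : YoungDiagram) (M : ℕ) :
    #(stackedDominoes lam M) = ∑ j ∈ range M, lam.colLen j / 2 := by
  rw [stackedDominoes, card_biUnion]
  · refine sum_congr rfl fun j _ => ?_
    rw [card_image_of_injective _ fun m m' h => by simp only [Prod.mk.injEq] at h; omega,
      card_range]
  · intro j _ j' _ hne
    simp only [Function.onFun, disjoint_left, mem_image]
    rintro _ ⟨m, -, rfl⟩ ⟨m', -, h⟩
    exact hne (Prod.ext_iff.mp h).2.symm

theorem vDom_eq_sum_colLen {lam : YoungDiagram} {M : ℕ} (hM : lam.rowLen 0 ≤ M) :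
    vDom lam = ∑ j ∈ range M, lam.colLen j / 2 := by
  have hbound : ∀ k ∈ {k | ∃ S, IsVDominoSet lam S ∧ #S = k},
      k ≤ ∑ j ∈ range M, lam.colLen j / 2 := by
    rintro k ⟨S, hS, rfl⟩
    exact hS.card_le_sum_colLen hM
  exact le_antisymm (csSup_le ⟨0, ∅, by simp [IsVDominoSet], rfl⟩ hbound)
    (le_csSup ⟨_, hbound⟩ ⟨_, isVDominoSet_stackedDominoes lam M, card_stackedDominoes lam M⟩)

theorem YoungDiagram.IsAddableRow.vDom_addCell {μ : YoungDiagram} {r : ℕ}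
    (h : μ.IsAddableRow r) : vDom (μ.addCell r) = vDom μ + r % 2 := by
  have := μ.rowLen_le_card 0
  have hM : (μ.addCell r).rowLen 0 ≤ μ.card + 1 := by
    rw [h.rowLen_addCell]; split_ifs <;> omega
  have hc : μ.rowLen r ∈ range (μ.card + 1) :=
    mem_range.mpr (Nat.lt_succ_of_le (μ.rowLen_le_card r))
  rw [vDom_eq_sum_colLen (by omega : μ.rowLen 0 ≤ μ.card + 1), vDom_eq_sum_colLen hM,
    ← sum_erase_add _ _ hc, ← sum_erase_add _ _ hc,
    sum_congr rfl fun j hj => by rw [h.colLen_addCell, if_neg (ne_of_mem_erase hj), add_zero],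
    h.colLen_addCell, if_pos rfl, h.colLen_rowLen]
  omega

/-! ### Standard tableaux -/

def IsStdFilling (c : Finset (ℕ × ℕ)) (f : ℕ × ℕ → ℕ) : Prop :=
  (∀ x, x ∉ c → f x = 0) ∧ Set.BijOn f c (Set.Icc 1 #c) ∧
  ∀ x ∈ c, ∀ y ∈ c, ((x.1 = y.1 ∧ x.2 < y.2) ∨ (x.2 = y.2 ∧ x.1 < y.1)) → f x < f y

def inversions (c : Finset (ℕ × ℕ)) (f : ℕ × ℕ → ℕ) : Finset ((ℕ × ℕ) × (ℕ × ℕ)) :=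
  {p ∈ c ×ˢ c | (p.1.1 < p.2.1 ∨ (p.1.1 = p.2.1 ∧ p.1.2 < p.2.2)) ∧ f p.2 < f p.1}

theorem isSkewSYT_iff {μ lam : YoungDiagram} {f : ℕ × ℕ → ℕ} :
    IsSkewSYT μ lam f ↔ IsStdFilling (cellsOf μ lam) f := Iff.rfl

theorem tabSign_eq {μ lam : YoungDiagram} (f : ℕ × ℕ → ℕ) :
    tabSign μ lam f = (-1) ^ #(inversions (cellsOf μ lam) f) := rfl

section Fillings

variable {c : Finset (ℕ × ℕ)} {f : ℕ × ℕ → ℕ} {x : ℕ × ℕ}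

theorem finite_setOf_isStdFilling (c : Finset (ℕ × ℕ)) : {f | IsStdFilling c f}.Finite := by
  refine (Set.finite_range fun (g : c → Fin (#c + 1)) x =>
    if h : x ∈ c then (g ⟨x, h⟩ : ℕ) else 0).subset fun f hf =>
      ⟨fun x => ⟨f x, Nat.lt_succ_of_le (hf.2.1.1 x.2).2⟩, funext fun x => ?_⟩
  dsimp only
  split_ifs with h
  · rfl
  · exact (hf.1 x h).symm

theorem inversions_congr {g : ℕ × ℕ → ℕ} (h : ∀ y ∈ c, f y = g y) :
    inversions c f = inversions c g :=
  filter_congr fun p hp => by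
    rw [mem_product] at hp
    rw [h _ hp.1, h _ hp.2]

theorem card_inversions_insert (hx : x ∉ c) (hmax : ∀ y ∈ c, f y < f x) :
    #(inversions (insert x c) f) =
      #(inversions c f) + #{y ∈ c | x.1 < y.1 ∨ (x.1 = y.1 ∧ x.2 < y.2)} := by
  simp only [inversions, card_filter, sum_product, sum_insert hx, lt_irrefl, and_false,
    or_false, if_false, zero_add, sum_add_distrib]
  have hmax' : ∀ y ∈ c, ¬ f x < f y := fun y hy => (hmax y hy).not_gt
  simp +contextual only [hmax, hmax', and_true, and_false, if_false, sum_const_zero, zero_add]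
  ring

theorem IsStdFilling.update_insert (hf : IsStdFilling c f) (hx : x ∉ c)
    (hcorner : ∀ y ∈ c, ¬ ((x.1 = y.1 ∧ x.2 < y.2) ∨ (x.2 = y.2 ∧ x.1 < y.1))) :
    IsStdFilling (insert x c) (Function.update f x (#c + 1)) := by
  obtain ⟨hzero, hbij, hinc⟩ := hf
  have hne : ∀ y ∈ c, y ≠ x := fun y hy h => hx (h ▸ hy)
  have hlt : ∀ y ∈ c, f y < #c + 1 := fun y hy => Nat.lt_succ_of_le (hbij.mapsTo hy).2
  refine ⟨fun y hy => ?_, ?_, ?_⟩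
  · rw [mem_insert, not_or] at hy
    rw [Function.update_of_ne hy.1, hzero y hy.2]
  · rw [card_insert_of_notMem hx, coe_insert,
      ← Set.insert_Icc_right_eq_Icc_add_one (Nat.le_add_left 1 #c)]
    have hbij' : Set.BijOn (Function.update f x (#c + 1)) c (Set.Icc 1 #c) :=
      hbij.congr fun y hy => (Function.update_of_ne (hne y hy) _ _).symm
    simpa using hbij'.insert (a := x) (by simp)
  · intro y hy z hz hyz
    rw [mem_insert] at hy hz
    rcases hy with rfl | hy <;> rcases hz with rfl | hz
    · omega
    · exact absurd hyz (hcorner z hz)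
    · simpa [Function.update_of_ne (hne y hy)] using hlt y hy
    · simpa [Function.update_of_ne (hne y hy), Function.update_of_ne (hne z hz)] using
        hinc y hy z hz hyz

theorem IsStdFilling.update_erase (hf : IsStdFilling c f) (hx : x ∈ c) (hfx : f x = #c) :
    IsStdFilling (c.erase x) (Function.update f x 0) := by
  obtain ⟨hzero, hbij, hinc⟩ := hf
  have hupd : ∀ y ∈ c.erase x, Function.update f x 0 y = f y :=
    fun y hy => Function.update_of_ne (ne_of_mem_erase hy) _ _
  refine ⟨fun y hy => ?_, ?_, fun y hy z hz hyz => ?_⟩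
  · rcases eq_or_ne y x with rfl | hyx
    · exact Function.update_self _ _ _
    · rw [Function.update_of_ne hyx, hzero y fun h => hy (mem_erase.mpr ⟨hyx, h⟩)]
  · have hIcc : Set.Icc 1 #c \ {#c} = Set.Icc 1 #(c.erase x) := by
      ext v
      simp only [Set.mem_sdiff, Set.mem_Icc, Set.mem_singleton_iff, card_erase_of_mem hx]
      omega
    have := hbij.sdiff_singleton (mem_coe.mpr hx)
    rw [hfx, hIcc, ← coe_singleton, ← coe_sdiff, ← erase_eq] at this
    exact this.congr fun y hy => (hupd y hy).symm
  · rw [hupd y hy, hupd z hz]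
    exact hinc y (mem_of_mem_erase hy) z (mem_of_mem_erase hz) hyz

theorem injOn_update_of_notMem (hx : x ∉ c) (v : ℕ) :
    Set.InjOn (fun f : ℕ × ℕ → ℕ => Function.update f x v) {f | IsStdFilling c f} :=
  fun f hf g hg hfg => funext fun y => by
    rcases eq_or_ne y x with rfl | hy
    · rw [hf.1 y hx, hg.1 y hx]
    · simpa [Function.update_of_ne hy] using congrFun hfg y

end Fillings

namespace YoungDiagram

variable {α lam : YoungDiagram} {r : ℕ}

theorem IsRemovableRow.cellsOf_removeCell (h : lam.IsRemovableRow r) (α : YoungDiagram) :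
    cellsOf α (lam.removeCell r) = (cellsOf α lam).erase (lam.corner r) := by
  rw [cellsOf, cellsOf, h.cells_removeCell, erase_sdiff_comm]

theorem IsRemovableRow.corner_notMem_cellsOf_removeCell (h : lam.IsRemovableRow r) :
    lam.corner r ∉ cellsOf α (lam.removeCell r) := by
  rw [h.cellsOf_removeCell]
  exact notMem_erase _ _

theorem IsRemovableRow.corner_mem_cellsOf (h : lam.IsRemovableRow r)
    (hle : α ≤ lam.removeCell r) : lam.corner r ∈ cellsOf α lam :=
  mem_sdiff.mpr ⟨(mem_cells _).mpr h.corner_mem,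
    fun hx => (h.mem_removeCell.mp (hle ((mem_cells _).mp hx))).1 rfl⟩

theorem IsRemovableRow.insert_cellsOf_removeCell (h : lam.IsRemovableRow r)
    (hle : α ≤ lam.removeCell r) :
    insert (lam.corner r) (cellsOf α (lam.removeCell r)) = cellsOf α lam := by
  rw [h.cellsOf_removeCell, insert_erase (h.corner_mem_cellsOf hle)]

theorem IsRemovableRow.le_removeCell (h : lam.IsRemovableRow r) (hle : α ≤ lam)
    (hx : lam.corner r ∉ α) : α ≤ lam.removeCell r :=
  fun _ hy => h.mem_removeCell.mpr ⟨fun hyx => hx (hyx ▸ hy), hle hy⟩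

theorem IsRemovableRow.not_right_or_below_corner (h : lam.IsRemovableRow r) {y : ℕ × ℕ}
    (hy : y ∈ lam) :
    ¬ (((lam.corner r).1 = y.1 ∧ (lam.corner r).2 < y.2) ∨
      ((lam.corner r).2 = y.2 ∧ (lam.corner r).1 < y.1)) := by
  have hy' := mem_iff_lt_rowLen.mp hy
  unfold IsRemovableRow at h
  dsimp only [corner]
  rintro (⟨rfl, h₂⟩ | ⟨h₁, h₂⟩)
  · omega
  · have := lam.rowLen_anti (r + 1) y.1 h₂
    omega

/-- The cells read after the corner of row `r` are exactly those in lower rows. -/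
theorem IsRemovableRow.card_readAfter_corner_add_cellsBelow (h : lam.IsRemovableRow r)
    (hle : α ≤ lam.removeCell r) :
    #{y ∈ cellsOf α (lam.removeCell r) |
        (lam.corner r).1 < y.1 ∨ ((lam.corner r).1 = y.1 ∧ (lam.corner r).2 < y.2)} +
      α.cellsBelow r = lam.cellsBelow r := by
  have hrow : ∀ y ∈ cellsOf α (lam.removeCell r),
      ((lam.corner r).1 < y.1 ∨ ((lam.corner r).1 = y.1 ∧ (lam.corner r).2 < y.2)) ↔ r < y.1 := by
    intro y hy
    have hy' := (mem_sdiff.mp hy).1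
    rw [mem_cells, h.mem_removeCell] at hy'
    have := mem_iff_lt_rowLen.mp hy'.2
    refine ⟨fun h' => h'.resolve_right fun ⟨h₁, h₂⟩ => hy'.1 (Prod.ext h₁.symm ?_), Or.inl⟩
    dsimp only [corner] at h₁ h₂ ⊢
    rw [← h₁] at this
    omega
  have hsub : {y ∈ α.cells | r < y.1} ⊆ {y ∈ (lam.removeCell r).cells | r < y.1} :=
    filter_subset_filter _ hle
  have hsdiff : {y ∈ cellsOf α (lam.removeCell r) | r < y.1} =
      {y ∈ (lam.removeCell r).cells | r < y.1} \ {y ∈ α.cells | r < y.1} := by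
    ext y
    simp only [cellsOf, mem_filter, mem_sdiff]
    tauto
  rw [filter_congr hrow, hsdiff, card_sdiff_of_subset hsub, ← h.cellsBelow_removeCell_self]
  exact Nat.sub_add_cancel (card_le_card hsub)

theorem IsSkewSYT.eq_corner_of_eq_card {f : ℕ × ℕ → ℕ} {x : ℕ × ℕ} (hf : IsSkewSYT α lam f)
    (hx : x ∈ cellsOf α lam) (hfx : f x = #(cellsOf α lam)) :
    lam.IsRemovableRow x.1 ∧ lam.corner x.1 = x := by
  obtain ⟨hxlam, hxα⟩ := mem_sdiff.mp hx
  rw [mem_cells] at hxlam hxα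
  have hnbr : ∀ y, x ≤ y → ((x.1 = y.1 ∧ x.2 < y.2) ∨ (x.2 = y.2 ∧ x.1 < y.1)) → y ∉ lam := by
    intro y hxy hlt hy
    have hyc : y ∈ cellsOf α lam :=
      mem_sdiff.mpr ⟨(mem_cells _).mpr hy, fun hyα => hxα (α.isLowerSet hxy ((mem_cells _).mp hyα))⟩
    have := hf.2.2 x hx y hyc hlt
    have := (hf.2.1.mapsTo (mem_coe.mpr hyc)).2
    omega
  have hright := hnbr (x.1, x.2 + 1) (Prod.mk_le_mk.mpr ⟨le_rfl, x.2.le_succ⟩)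
    (Or.inl ⟨rfl, x.2.lt_succ_self⟩)
  have hbelow := hnbr (x.1 + 1, x.2) (Prod.mk_le_mk.mpr ⟨x.1.le_succ, le_rfl⟩)
    (Or.inr ⟨rfl, x.1.lt_succ_self⟩)
  rw [mem_iff_lt_rowLen] at hright hbelow
  have := mem_iff_lt_rowLen.mp hxlam
  exact ⟨by unfold IsRemovableRow; omega, Prod.ext rfl (by dsimp only [corner]; omega)⟩

end YoungDiagram

noncomputable def sytFinset (α lam : YoungDiagram) : Finset (ℕ × ℕ → ℕ) :=
  (finite_setOf_isStdFilling (cellsOf α lam)).toFinset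

section Recursion

variable {α lam : YoungDiagram} {r : ℕ} {f : ℕ × ℕ → ℕ}

theorem mem_sytFinset : f ∈ sytFinset α lam ↔ IsSkewSYT α lam f :=
  Set.Finite.mem_toFinset _

theorem imb_eq_sum_sytFinset (α lam : YoungDiagram) :
    imb α lam = ∑ f ∈ sytFinset α lam, tabSign α lam f :=
  finsum_mem_eq_finite_toFinset_sum _ _

theorem imb_self (α : YoungDiagram) : imb α α = 1 := by
  have hempty : cellsOf α α = ∅ := Finset.sdiff_self _
  have hsyt : sytFinset α α = {0} := by
    ext f
    rw [mem_sytFinset, mem_singleton, IsSkewSYT, hempty]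
    refine ⟨fun hf => funext fun x => hf.1 x (notMem_empty x), ?_⟩
    rintro rfl
    exact ⟨fun _ _ => rfl, by simp, by simp⟩
  simp [imb_eq_sum_sytFinset, hsyt, tabSign_eq, hempty, inversions]

theorem IsSkewSYT.update_corner (h : lam.IsRemovableRow r) (hle : α ≤ lam.removeCell r)
    (hf : IsSkewSYT α (lam.removeCell r) f) :
    IsSkewSYT α lam (Function.update f (lam.corner r) #(cellsOf α lam)) := by
  rw [isSkewSYT_iff, ← h.insert_cellsOf_removeCell hle,
    card_insert_of_notMem h.corner_notMem_cellsOf_removeCell]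
  exact IsStdFilling.update_insert hf h.corner_notMem_cellsOf_removeCell fun y hy =>
    h.not_right_or_below_corner (removeCell_le lam r ((mem_cells _).mp (mem_sdiff.mp hy).1))

theorem tabSign_update_corner (h : lam.IsRemovableRow r) (hle : α ≤ lam.removeCell r)
    (hf : IsSkewSYT α (lam.removeCell r) f) :
    tabSign α lam (Function.update f (lam.corner r) #(cellsOf α lam)) =
      (-1) ^ (lam.cellsBelow r + α.cellsBelow r) * tabSign α (lam.removeCell r) f := by
  have hx := h.corner_notMem_cellsOf_removeCell (α := α)
  have hcells := h.insert_cellsOf_removeCell hle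
  have hN : #(cellsOf α lam) = #(cellsOf α (lam.removeCell r)) + 1 := by
    rw [← hcells, card_insert_of_notMem hx]
  set N := #(cellsOf α lam)
  have hupd : ∀ y ∈ cellsOf α (lam.removeCell r), Function.update f (lam.corner r) N y = f y :=
    fun y hy => Function.update_of_ne (ne_of_mem_of_not_mem hy hx) _ _
  have hmax : ∀ y ∈ cellsOf α (lam.removeCell r),
      Function.update f (lam.corner r) N y < Function.update f (lam.corner r) N (lam.corner r) := by
    intro y hy
    rw [hupd y hy, Function.update_self, hN]
    exact Nat.lt_succ_of_le (hf.2.1.mapsTo hy).2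
  rw [tabSign_eq, tabSign_eq, ← hcells, card_inversions_insert hx hmax, inversions_congr hupd,
    ← h.card_readAfter_corner_add_cellsBelow hle, add_assoc _ (α.cellsBelow r), ← two_mul,
    pow_add, pow_add _ _ (2 * _), pow_mul, neg_one_sq, one_pow, mul_one, mul_comm]

theorem sytFinset_eq_biUnion (hle : α ≤ lam) (hne : α ≠ lam) :
    sytFinset α lam = {r ∈ lam.removableRows | α ≤ lam.removeCell r}.biUnion fun r =>
      (sytFinset α (lam.removeCell r)).image
        fun f => Function.update f (lam.corner r) #(cellsOf α lam) := by
  ext f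
  simp only [mem_biUnion, mem_image, mem_filter, mem_removableRows, mem_sytFinset]
  constructor
  · intro hf
    have hpos : 0 < #(cellsOf α lam) := card_pos.mpr <| sdiff_nonempty.mpr fun hsub =>
      hne (le_antisymm hle fun x hx => (mem_cells _).mp (hsub ((mem_cells _).mpr hx)))
    obtain ⟨x, hx, hfx⟩ := hf.2.1.surjOn (Set.mem_Icc.mpr ⟨hpos, le_rfl⟩)
    obtain ⟨hr, hcorner⟩ := hf.eq_corner_of_eq_card hx hfx
    have hle' : α ≤ lam.removeCell x.1 :=
      hr.le_removeCell hle fun h' => (mem_sdiff.mp hx).2 ((mem_cells _).mpr (hcorner ▸ h'))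
    refine ⟨x.1, ⟨hr, hle'⟩, Function.update f x 0, ?_, ?_⟩
    · rw [isSkewSYT_iff, hr.cellsOf_removeCell, hcorner]
      exact IsStdFilling.update_erase hf hx hfx
    · rw [hcorner, Function.update_idem, ← hfx, Function.update_eq_self]
  · rintro ⟨r, ⟨hr, hle'⟩, f, hf, rfl⟩
    exact hf.update_corner hr hle'

theorem imb_eq_sum_removableRows (hle : α ≤ lam) (hne : α ≠ lam) :
    imb α lam = ∑ r ∈ lam.removableRows with α ≤ lam.removeCell r,
      (-1) ^ (lam.cellsBelow r + α.cellsBelow r) * imb α (lam.removeCell r) := by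
  set N := #(cellsOf α lam)
  have hdisj : (({r ∈ lam.removableRows | α ≤ lam.removeCell r} : Finset ℕ) : Set ℕ)
      |>.PairwiseDisjoint fun r =>
        (sytFinset α (lam.removeCell r)).image fun f => Function.update f (lam.corner r) N := by
    intro r₁ hr₁ r₂ hr₂ hne₁₂
    simp only [coe_filter, mem_removableRows] at hr₁ hr₂
    rw [Function.onFun, disjoint_left]
    rintro _ hg₁ hg₂
    obtain ⟨f₁, hf₁, rfl⟩ := mem_image.mp hg₁
    obtain ⟨f₂, -, hfg⟩ := mem_image.mp hg₂
    have hsyt := (mem_sytFinset.mp hf₁).update_corner hr₁.1 hr₁.2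
    refine hne₁₂ (congrArg Prod.fst (hsyt.2.1.injOn (hr₁.1.corner_mem_cellsOf hr₁.2)
      (hr₂.1.corner_mem_cellsOf hr₂.2) ?_))
    rw [Function.update_self, ← hfg, Function.update_self]
  rw [imb_eq_sum_sytFinset, sytFinset_eq_biUnion hle hne, sum_biUnion hdisj]
  refine sum_congr rfl fun r hr => ?_
  obtain ⟨hr, hle'⟩ := (mem_filter.mp hr).imp_left mem_removableRows.mp
  rw [sum_image <| (injOn_update_of_notMem hr.corner_notMem_cellsOf_removeCell N).mono
      fun _ hf => mem_sytFinset.mp (mem_coe.mp hf),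
    imb_eq_sum_sytFinset, mul_sum]
  exact sum_congr rfl fun f hf => tabSign_update_corner hr hle' (mem_sytFinset.mp hf)

end Recursion

/-! ### The signed up and down operators -/

noncomputable def upVec (ν : YoungDiagram) : YoungDiagram →₀ ℤ :=
  ∑ r ∈ ν.addableRows, Finsupp.single (ν.addCell r) ((-1) ^ ν.cellsBelow r)

noncomputable def downVec (τ : YoungDiagram) : YoungDiagram →₀ ℤ :=
  ∑ r ∈ τ.removableRows, Finsupp.single (τ.removeCell r) ((-1) ^ (r + τ.cellsBelow r))

noncomputable def signedUp : Module.End ℤ (YoungDiagram →₀ ℤ) :=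
  Finsupp.linearCombination ℤ upVec

noncomputable def signedDown : Module.End ℤ (YoungDiagram →₀ ℤ) :=
  Finsupp.linearCombination ℤ downVec

theorem upVec_apply (ν σ : YoungDiagram) :
    upVec ν σ = ∑ r ∈ σ.removableRows with σ.removeCell r = ν, (-1) ^ σ.cellsBelow r := by
  simp only [upVec, Finsupp.finsetSum_apply, Finsupp.single_apply, ← sum_filter]
  refine sum_congr ?_ fun r hr => ?_
  · ext r
    simp only [mem_filter, mem_addableRows, mem_removableRows]
    exact isAddableRow_and_addCell_eq_iff
  · obtain ⟨hr', rfl⟩ := mem_filter.mp hr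
    rw [(mem_removableRows.mp hr').cellsBelow_removeCell_self]

theorem downVec_apply (τ σ : YoungDiagram) :
    downVec τ σ = ∑ r ∈ σ.addableRows with σ.addCell r = τ, (-1) ^ (r + σ.cellsBelow r) := by
  simp only [downVec, Finsupp.finsetSum_apply, Finsupp.single_apply, ← sum_filter]
  refine sum_congr ?_ fun r hr => ?_
  · ext r
    simp only [mem_filter, mem_addableRows, mem_removableRows]
    exact isAddableRow_and_addCell_eq_iff.symm
  · obtain ⟨hr', rfl⟩ := mem_filter.mp hr
    rw [(mem_addableRows.mp hr').cellsBelow_addCell_self]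

theorem signedUp_single (ν : YoungDiagram) (c : ℤ) :
    signedUp (Finsupp.single ν c) = c • upVec ν :=
  Finsupp.linearCombination_single _ _ _

theorem signedDown_single (τ : YoungDiagram) (c : ℤ) :
    signedDown (Finsupp.single τ c) = c • downVec τ :=
  Finsupp.linearCombination_single _ _ _

theorem signedUp_apply (h : YoungDiagram →₀ ℤ) (σ : YoungDiagram) :
    signedUp h σ = ∑ r ∈ σ.removableRows, (-1) ^ σ.cellsBelow r * h (σ.removeCell r) := by
  induction h using Finsupp.induction_linear with
  | zero => simp
  | add f g hf hg => simp [hf, hg, mul_add, sum_add_distrib]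
  | single ν c =>
    simp [signedUp_single, upVec_apply, mul_sum, Finsupp.single_apply, sum_filter, eq_comm,
      mul_comm]

theorem signedDown_apply (h : YoungDiagram →₀ ℤ) (σ : YoungDiagram) :
    signedDown h σ = ∑ r ∈ σ.addableRows, (-1) ^ (r + σ.cellsBelow r) * h (σ.addCell r) := by
  induction h using Finsupp.induction_linear with
  | zero => simp
  | add f g hf hg => simp [hf, hg, mul_add, sum_add_distrib]
  | single ν c =>
    simp [signedDown_single, downVec_apply, mul_sum, Finsupp.single_apply, sum_filter, eq_comm,
      mul_comm]

section Anticommutation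

variable (h : YoungDiagram →₀ ℤ) (σ : YoungDiagram)

noncomputable def downUpTerm (r s : ℕ) : ℤ :=
  if σ.IsAddableRow r ∧ (σ.addCell r).IsRemovableRow s then
    (-1) ^ (r + σ.cellsBelow r + (σ.addCell r).cellsBelow s) * h ((σ.addCell r).removeCell s)
  else 0

noncomputable def upDownTerm (r s : ℕ) : ℤ :=
  if σ.IsRemovableRow s ∧ (σ.removeCell s).IsAddableRow r then
    (-1) ^ (r + σ.cellsBelow s + (σ.removeCell s).cellsBelow r) * h ((σ.removeCell s).addCell r)
  else 0

theorem signedDown_signedUp_apply :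
    signedDown (signedUp h) σ =
      ∑ r ∈ range (σ.card + 2), ∑ s ∈ range (σ.card + 2), downUpTerm h σ r s := by
  rw [signedDown_apply, sum_addableRows_eq_sum_range (N := σ.card + 2) (by omega)]
  refine sum_congr rfl fun r _ => ?_
  unfold downUpTerm
  by_cases hr : σ.IsAddableRow r
  · rw [if_pos hr, signedUp_apply,
      sum_removableRows_eq_sum_range (N := σ.card + 2) (by rw [hr.card_addCell]; omega), mul_sum]
    refine sum_congr rfl fun s _ => ?_
    simp only [hr, true_and]
    split_ifs <;> ring
  · simp [hr]

theorem signedUp_signedDown_apply :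
    signedUp (signedDown h) σ =
      ∑ r ∈ range (σ.card + 2), ∑ s ∈ range (σ.card + 2), upDownTerm h σ r s := by
  rw [signedUp_apply, sum_removableRows_eq_sum_range (N := σ.card + 2) (by omega), sum_comm]
  refine sum_congr rfl fun s _ => ?_
  unfold upDownTerm
  by_cases hs : σ.IsRemovableRow s
  · rw [if_pos hs, signedDown_apply,
      sum_addableRows_eq_sum_range (N := σ.card + 2) (by have := hs.card_removeCell; omega),
      mul_sum]
    refine sum_congr rfl fun r _ => ?_
    simp only [hs, true_and]
    split_ifs <;> ring
  · simp [hs]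

theorem downUpTerm_self (r : ℕ) :
    downUpTerm h σ r r = (if σ.IsAddableRow r then (-1) ^ r else 0) * h σ := by
  unfold downUpTerm
  by_cases hr : σ.IsAddableRow r
  · rw [if_pos ⟨hr, hr.isRemovableRow_addCell⟩, if_pos hr, hr.removeCell_addCell,
      hr.cellsBelow_addCell_self, add_assoc, ← two_mul, pow_add, pow_mul, neg_one_sq, one_pow,
      mul_one]
  · simp [hr]

theorem upDownTerm_self (r : ℕ) :
    upDownTerm h σ r r = (if σ.IsRemovableRow r then (-1) ^ r else 0) * h σ := by
  unfold upDownTerm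
  by_cases hr : σ.IsRemovableRow r
  · rw [if_pos ⟨hr, hr.isAddableRow_removeCell⟩, if_pos hr, hr.addCell_removeCell,
      hr.cellsBelow_removeCell_self,
      add_assoc, ← two_mul, pow_add, pow_mul, neg_one_sq, one_pow, mul_one]
  · simp [hr]

/-- Adding a cell in row `r` and removing one in row `s ≠ r` commute, but exactly one of the two
orders passes the new cell over the other one in the count of cells below. -/
theorem downUpTerm_add_upDownTerm {r s : ℕ} (hrs : r ≠ s) :
    downUpTerm h σ r s + upDownTerm h σ r s = 0 := by
  unfold downUpTerm upDownTerm
  by_cases hc : σ.IsAddableRow r ∧ (σ.addCell r).IsRemovableRow s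
  · have hc' := (isAddableRow_and_isRemovableRow_addCell_iff hrs).mp hc
    rw [if_pos hc, if_pos hc', removeCell_addCell_comm hrs hc.1 hc.2]
    have e₁ := hc.1.cellsBelow_addCell s
    have e₂ := hc'.1.cellsBelow_removeCell r
    have hpar : r + σ.cellsBelow r + (σ.addCell r).cellsBelow s =
        r + σ.cellsBelow s + (σ.removeCell s).cellsBelow r + 1 := by
      rcases hrs.lt_or_gt with hlt | hlt
      · rw [if_neg (by omega)] at e₁; rw [if_pos hlt] at e₂; omega
      · rw [if_pos hlt] at e₁; rw [if_neg (by omega)] at e₂; omega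
    rw [hpar, pow_succ]
    ring
  · rw [if_neg hc, if_neg fun hc' => hc ((isAddableRow_and_isRemovableRow_addCell_iff hrs).mpr hc'),
      add_zero]

end Anticommutation

theorem signedDown_mul_signedUp_add_signedUp_mul_signedDown :
    signedDown * signedUp + signedUp * signedDown = (1 : Module.End ℤ (YoungDiagram →₀ ℤ)) := by
  refine LinearMap.ext fun h => Finsupp.ext fun σ => ?_
  simp only [LinearMap.add_apply, Module.End.mul_apply, Finsupp.add_apply, Module.End.one_apply]
  rw [signedDown_signedUp_apply, signedUp_signedDown_apply, ← sum_add_distrib]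
  have hdiag (r : ℕ) (hr : r ∈ range (σ.card + 2)) :
      ∑ s ∈ range (σ.card + 2), downUpTerm h σ r s + ∑ s ∈ range (σ.card + 2), upDownTerm h σ r s =
        (if σ.IsAddableRow r then (-1) ^ r else 0) * h σ +
          (if σ.IsRemovableRow r then (-1) ^ r else 0) * h σ := by
    rw [← sum_add_distrib, ← downUpTerm_self, ← upDownTerm_self]
    exact sum_eq_single_of_mem r hr fun s _ hsr => downUpTerm_add_upDownTerm h σ hsr.symm
  rw [sum_congr rfl hdiag, sum_add_distrib, ← sum_mul, ← sum_mul,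
    ← sum_addableRows_eq_sum_range (by omega), ← sum_removableRows_eq_sum_range (by omega),
    ← add_mul, sum_addableRows_add_sum_removableRows, one_mul]

theorem commute_mul_self_of_mul_add_mul_eq_one {R : Type*} [Ring R] {d u : R}
    (h : d * u + u * d = 1) : Commute d (u * u) := by
  have hdu : d * u = 1 - u * d := eq_sub_of_add_eq h
  calc d * (u * u) = (1 - u * d) * u := by rw [← mul_assoc, hdu]
    _ = u * (1 - d * u) := by noncomm_ring
    _ = u * u * d := by rw [hdu]; noncomm_ring

theorem commute_pow_pow_of_mul_add_mul_eq_one {R : Type*} [Ring R] {d u : R}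
    (h : d * u + u * d = 1) {n : ℕ} (hn : Even n) : Commute (d ^ n) (u ^ n) := by
  obtain ⟨k, rfl⟩ := hn
  rw [← two_mul, pow_mul u, sq]
  exact ((commute_mul_self_of_mul_add_mul_eq_one h).pow_right k).pow_left _

/-! ### The signed pairing -/

noncomputable def signedPairing :
    (YoungDiagram →₀ ℤ) →ₗ[ℤ] (YoungDiagram →₀ ℤ) →ₗ[ℤ] ℤ :=
  Finsupp.lsum ℤ fun lam => LinearMap.toSpanSingleton ℤ _ ((-1) ^ vDom lam • Finsupp.lapply lam)

theorem signedPairing_single_left (ν : YoungDiagram) (c : ℤ) (g : YoungDiagram →₀ ℤ) :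
    signedPairing (Finsupp.single ν c) g = c * ((-1) ^ vDom ν * g ν) := by
  simp [signedPairing]

theorem signedPairing_apply (h g : YoungDiagram →₀ ℤ) :
    signedPairing h g = ∑ lam ∈ h.support, (-1) ^ vDom lam * h lam * g lam := by
  simp [signedPairing, Finsupp.lsum_apply, Finsupp.sum, mul_assoc, mul_left_comm]

theorem signedPairing_comm (h g : YoungDiagram →₀ ℤ) : signedPairing h g = signedPairing g h := by
  refine LinearMap.congr_fun₂ (LinearMap.ext_basis Finsupp.basisSingleOne Finsupp.basisSingleOne
    fun ν τ => ?_ : signedPairing = signedPairing.flip) h g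
  simp only [Finsupp.coe_basisSingleOne, LinearMap.flip_apply, signedPairing_single_left,
    Finsupp.single_apply]
  rcases eq_or_ne ν τ with rfl | hντ
  · rfl
  · simp [hντ, hντ.symm]

theorem signedPairing_signedUp (h g : YoungDiagram →₀ ℤ) :
    signedPairing (signedUp h) g = signedPairing h (signedDown g) := by
  refine LinearMap.congr_fun₂ (LinearMap.ext_basis Finsupp.basisSingleOne Finsupp.basisSingleOne
    fun ν τ => ?_ : signedPairing ∘ₗ signedUp = signedPairing.compl₂ signedDown) h g
  simp only [Finsupp.coe_basisSingleOne, LinearMap.comp_apply, LinearMap.compl₂_apply,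
    signedUp_single, signedDown_single, one_smul, signedPairing_single_left, one_mul]
  rw [signedPairing_comm, signedPairing_single_left, one_mul, upVec_apply, mul_sum, downVec]
  simp only [Finsupp.finsetSum_apply, Finsupp.single_apply, ← sum_filter, mul_sum]
  refine sum_congr rfl fun r hr => ?_
  obtain ⟨hr', rfl⟩ := mem_filter.mp hr
  have hr := mem_removableRows.mp hr'
  conv_lhs => rw [← hr.addCell_removeCell, hr.isAddableRow_removeCell.vDom_addCell]
  rw [pow_add, pow_add, neg_one_pow_eq_pow_mod_two (R := ℤ) r, mul_assoc,
    hr.addCell_removeCell]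

theorem signedPairing_signedUp_pow (n : ℕ) (h g : YoungDiagram →₀ ℤ) :
    signedPairing ((signedUp ^ n) h) g = signedPairing h ((signedDown ^ n) g) := by
  induction n generalizing h with
  | zero => rfl
  | succ n ih =>
    rw [pow_succ, Module.End.mul_apply, ih, signedPairing_signedUp, ← Module.End.mul_apply,
      ← pow_succ']

theorem le_and_card_of_signedUp_pow_apply_ne_zero {α σ : YoungDiagram} {n : ℕ}
    (h : (signedUp ^ n) (Finsupp.single α 1) σ ≠ 0) : α ≤ σ ∧ σ.card = α.card + n := by
  induction n generalizing σ with
  | zero =>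
    obtain rfl : α = σ := by by_contra hne; exact h (Finsupp.single_eq_of_ne (Ne.symm hne))
    exact ⟨le_rfl, rfl⟩
  | succ n ih =>
    rw [pow_succ', Module.End.mul_apply, signedUp_apply] at h
    obtain ⟨r, hr, hne⟩ := exists_ne_zero_of_sum_ne_zero h
    obtain ⟨hle, hcard⟩ := ih (right_ne_zero_of_mul hne)
    have := (mem_removableRows.mp hr).card_removeCell
    exact ⟨hle.trans (removeCell_le σ r), by omega⟩

theorem le_and_card_of_signedDown_pow_apply_ne_zero {α σ : YoungDiagram} {n : ℕ}
    (h : (signedDown ^ n) (Finsupp.single α 1) σ ≠ 0) : σ ≤ α ∧ σ.card + n = α.card := by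
  induction n generalizing σ with
  | zero =>
    obtain rfl : α = σ := by by_contra hne; exact h (Finsupp.single_eq_of_ne (Ne.symm hne))
    exact ⟨le_rfl, rfl⟩
  | succ n ih =>
    rw [pow_succ', Module.End.mul_apply, signedDown_apply] at h
    obtain ⟨r, hr, hne⟩ := exists_ne_zero_of_sum_ne_zero h
    obtain ⟨hle, hcard⟩ := ih (right_ne_zero_of_mul hne)
    have := (mem_addableRows.mp hr).card_addCell
    exact ⟨(le_addCell σ r).trans hle, by omega⟩

noncomputable def skewSign (α lam : YoungDiagram) : ℤ :=
  (-1) ^ ∑ y ∈ cellsOf α lam, α.cellsBelow y.1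

theorem skewSign_sq (α lam : YoungDiagram) : skewSign α lam ^ 2 = 1 := by
  rw [skewSign, ← pow_mul, pow_mul', neg_one_sq, one_pow]

theorem YoungDiagram.IsRemovableRow.skewSign_eq {α lam : YoungDiagram} {r : ℕ}
    (h : lam.IsRemovableRow r) (hle : α ≤ lam.removeCell r) :
    skewSign α lam = (-1) ^ α.cellsBelow r * skewSign α (lam.removeCell r) := by
  rw [skewSign, skewSign, ← h.insert_cellsOf_removeCell hle,
    sum_insert h.corner_notMem_cellsOf_removeCell, pow_add]

theorem imb_eq_skewSign_mul_signedUp_pow {α lam : YoungDiagram} {n : ℕ} (hle : α ≤ lam)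
    (hcard : lam.card = α.card + n) :
    imb α lam = skewSign α lam * (signedUp ^ n) (Finsupp.single α 1) lam := by
  induction n generalizing lam with
  | zero =>
    obtain rfl := eq_of_le_of_card_le hle hcard.le
    simp [imb_self, skewSign, cellsOf]
  | succ n ih =>
    have hne : α ≠ lam := by rintro rfl; omega
    rw [imb_eq_sum_removableRows hle hne, pow_succ', Module.End.mul_apply, signedUp_apply, mul_sum,
      ← sum_filter_of_ne fun r _ hr => (le_and_card_of_signedUp_pow_apply_ne_zero
        (right_ne_zero_of_mul (right_ne_zero_of_mul hr))).1]
    refine sum_congr rfl fun r hr => ?_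
    obtain ⟨hr, hle'⟩ := (mem_filter.mp hr).imp_left mem_removableRows.mp
    have := hr.card_removeCell
    rw [ih hle' (by omega), hr.skewSign_eq hle', pow_add]
    ring

theorem sq_signedUp_pow_single_apply (n : ℕ) (μ α : YoungDiagram) :
    (signedUp ^ n) (Finsupp.single μ 1) α ^ 2 = (signedDown ^ n) (Finsupp.single α 1) μ ^ 2 := by
  have h := signedPairing_signedUp_pow n (Finsupp.single μ 1) (Finsupp.single α 1)
  rw [signedPairing_comm, signedPairing_single_left, signedPairing_single_left, one_mul,
    one_mul] at h
  have hsq : ∀ k : ℕ, ((-1 : ℤ) ^ k) ^ 2 = 1 := fun k => by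
    rw [← pow_mul, pow_mul', neg_one_sq, one_pow]
  calc _ = ((-1) ^ vDom α * (signedUp ^ n) (Finsupp.single μ 1) α) ^ 2 := by
        rw [mul_pow, hsq, one_mul]
    _ = _ := by rw [h, mul_pow, hsq, one_mul]

theorem finsum_mem_eq_signedPairing_self {s : Set YoungDiagram} {h : YoungDiagram →₀ ℤ}
    {F : YoungDiagram → ℤ} (hF : ∀ lam ∈ s, F lam ^ 2 = h lam ^ 2)
    (hs : ∀ lam, h lam ≠ 0 → lam ∈ s) :
    ∑ᶠ lam ∈ s, (-1 : ℤ) ^ vDom lam * F lam ^ 2 = signedPairing h h := by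
  rw [finsum_mem_eq_sum_of_subset _ (t := h.support) ?_ fun lam hlam =>
    hs lam (Finsupp.mem_support_iff.mp hlam), signedPairing_apply]
  · refine sum_congr rfl fun lam hlam => ?_
    rw [hF lam (hs lam (Finsupp.mem_support_iff.mp hlam))]
    ring
  · rintro lam ⟨hlam, hne⟩
    rw [mem_coe, Finsupp.mem_support_iff]
    intro h0
    exact hne (by simpa [h0] using hF lam hlam)

theorem stmt9_general (α : YoungDiagram) (n : ℕ) (hev : Even n) :
    (∑ᶠ lam ∈ {lam : YoungDiagram | α ≤ lam ∧ lam.card = α.card + n},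
      (-1 : ℤ) ^ vDom lam * (imb α lam) ^ 2) =
    ∑ᶠ μ ∈ {μ : YoungDiagram | μ ≤ α ∧ μ.card + n = α.card},
      (-1 : ℤ) ^ vDom μ * (imb μ α) ^ 2 := by
  set δ := Finsupp.single α (1 : ℤ)
  have hup : ∀ lam ∈ {lam : YoungDiagram | α ≤ lam ∧ lam.card = α.card + n},
      imb α lam ^ 2 = (signedUp ^ n) δ lam ^ 2 := fun lam ⟨hle, hcard⟩ => by
    rw [imb_eq_skewSign_mul_signedUp_pow hle hcard, mul_pow, skewSign_sq, one_mul]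
  have hdown : ∀ μ ∈ {μ : YoungDiagram | μ ≤ α ∧ μ.card + n = α.card},
      imb μ α ^ 2 = (signedDown ^ n) δ μ ^ 2 := fun μ ⟨hle, hcard⟩ => by
    rw [imb_eq_skewSign_mul_signedUp_pow hle hcard.symm, mul_pow, skewSign_sq, one_mul,
      sq_signedUp_pow_single_apply]
  have hcomm : Commute (signedDown ^ n) (signedUp ^ n) :=
    commute_pow_pow_of_mul_add_mul_eq_one signedDown_mul_signedUp_add_signedUp_mul_signedDown hev
  rw [finsum_mem_eq_signedPairing_self hup fun _ => le_and_card_of_signedUp_pow_apply_ne_zero,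
    finsum_mem_eq_signedPairing_self hdown fun _ => le_and_card_of_signedDown_pow_apply_ne_zero,
    signedPairing_signedUp_pow, ← Module.End.mul_apply, hcomm.eq, Module.End.mul_apply,
    signedPairing_comm, signedPairing_signedUp_pow]

/-- For even positive `n`:
`Σ_{λ/α ⊢ n} (-1)^{v(λ)} I_{λ/α}² = Σ_{α/μ ⊢ n} (-1)^{v(μ)} I_{α/μ}²`. -/
theorem stmt9 (α : YoungDiagram) (n : ℕ) (hn : 0 < n) (hev : Even n) :
    (∑ᶠ lam ∈ {lam : YoungDiagram | α ≤ lam ∧ lam.card = α.card + n},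
      (-1 : ℤ) ^ vDom lam * (imb α lam) ^ 2) =
    ∑ᶠ μ ∈ {μ : YoungDiagram | μ ≤ α ∧ μ.card + n = α.card},
      (-1 : ℤ) ^ vDom μ * (imb μ α) ^ 2 :=
  stmt9_general α n hev
end

section
/- Bijection between partial-tableau triples and standard-tableau quadruples: for fixed n and partitions μ ⊆ α, there is a bijection between triples (π, T, U) where π is a partial n-permutation and T, U are partial tableaux of shape α/μ with the bottom line of π and the entries of T partitioning [n], and the top line of π and the entries of U partitioning [n], and quadruples (π̃, Ĩ, T̃, Ũ) where π̃ ∈ S_n, T̃, Ũ are standard Young tableaux of shape α/μ, and Ĩ ⊆ [n] is the index set of an increasing subsequence of π̃ of length |α/μ|. Moreover under this bijection π̃ = π̄, sgn(T̃) = sgn(T), and sgn(Ũ) = sgn(U). -/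
open scoped Classical

/-- A partial `n`-permutation with entries in `{1,…,n}`, as a set of (top, bottom)
pairs with distinct tops and distinct bottoms. -/
def IsPPerm (n : ℕ) (P : Finset (ℕ × ℕ)) : Prop :=
  (∀ p ∈ P, p.1 ∈ Finset.Icc 1 n ∧ p.2 ∈ Finset.Icc 1 n) ∧
  (∀ p ∈ P, ∀ q ∈ P, p.1 = q.1 → p = q) ∧
  (∀ p ∈ P, ∀ q ∈ P, p.2 = q.2 → p = q)

/-- A partial tableau of shape `lam/μ`: distinct entries, increasing along rows and
columns, zero off the shape. -/
def IsPartialTab (μ lam : YoungDiagram) (f : ℕ × ℕ → ℕ) : Prop :=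
  (∀ x, x ∉ cellsOf μ lam → f x = 0) ∧
  Set.InjOn f (cellsOf μ lam) ∧
  ∀ x ∈ cellsOf μ lam, ∀ y ∈ cellsOf μ lam,
    ((x.1 = y.1 ∧ x.2 < y.2) ∨ (x.2 = y.2 ∧ x.1 < y.1)) → f x < f y

/-- Triples `(π, T, U)`: `π` a partial `n`-permutation, `T, U` partial tableaux on
`α/μ`, with bottom line of `π` ⊎ entries of `T` = `[n]` and top line of `π` ⊎
entries of `U` = `[n]`. -/
def TripleProp (n : ℕ) (μ α : YoungDiagram)
    (x : Finset (ℕ × ℕ) × (ℕ × ℕ → ℕ) × (ℕ × ℕ → ℕ)) : Prop :=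
  IsPPerm n x.1 ∧ IsPartialTab μ α x.2.1 ∧ IsPartialTab μ α x.2.2 ∧
  Disjoint (x.1.image Prod.snd) ((cellsOf μ α).image x.2.1) ∧
  x.1.image Prod.snd ∪ (cellsOf μ α).image x.2.1 = Finset.Icc 1 n ∧
  Disjoint (x.1.image Prod.fst) ((cellsOf μ α).image x.2.2) ∧
  x.1.image Prod.fst ∪ (cellsOf μ α).image x.2.2 = Finset.Icc 1 n

/-- Quadruples `(π̃, Ĩ, T̃, Ũ)`: `π̃` a permutation of `{1,…,n}` (identity elsewhere),
`Ĩ` the index set of an increasing subsequence of `π̃` of length `|α/μ|`, and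
`T̃, Ũ` standard Young tableaux of shape `α/μ`. -/
def QuadProp (n : ℕ) (μ α : YoungDiagram)
    (y : (ℕ → ℕ) × Finset ℕ × (ℕ × ℕ → ℕ) × (ℕ × ℕ → ℕ)) : Prop :=
  Set.BijOn y.1 (Finset.Icc 1 n) (Finset.Icc 1 n) ∧
  (∀ a : ℕ, a ∉ Finset.Icc 1 n → y.1 a = a) ∧
  ↑y.2.1 ⊆ (Finset.Icc 1 n) ∧ y.2.1.card = (cellsOf μ α).card ∧
  StrictMonoOn y.1 ↑y.2.1 ∧
  IsSkewSYT μ α y.2.2.1 ∧ IsSkewSYT μ α y.2.2.2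


section SS17Aux
noncomputable section

/-- rank of `v` in `S`: number of elements of `S` that are `≤ v`. -/
def rk (S : Finset ℕ) (v : ℕ) : ℕ := (S.filter (· ≤ v)).card

lemma rk_mem {S : Finset ℕ} {v : ℕ} (hv : v ∈ S) : rk S v ∈ Finset.Icc 1 S.card := by
  simp only [Finset.mem_Icc, rk]
  constructor
  · exact Finset.card_pos.2 ⟨v, Finset.mem_filter.2 ⟨hv, le_refl v⟩⟩
  · exact Finset.card_le_card (Finset.filter_subset _ _)

lemma rk_strictMonoOn (S : Finset ℕ) : StrictMonoOn (rk S) ↑S := by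
  intro u hu v hv huv
  apply Finset.card_lt_card
  constructor
  · intro x hx
    rcases Finset.mem_filter.1 hx with ⟨h1, h2⟩
    exact Finset.mem_filter.2 ⟨h1, le_trans h2 huv.le⟩
  · intro h
    have := h (Finset.mem_filter.2 ⟨hv, le_refl v⟩)
    exact absurd (Finset.mem_filter.1 this).2 (by omega)

lemma rk_injOn (S : Finset ℕ) : Set.InjOn (rk S) ↑S := (rk_strictMonoOn S).injOn

lemma rk_image (S : Finset ℕ) : S.image (rk S) = Finset.Icc 1 S.card := by
  apply Finset.eq_of_subset_of_card_le
  · intro i hi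
    obtain ⟨v, hv, rfl⟩ := Finset.mem_image.1 hi
    exact rk_mem hv
  · rw [Nat.card_Icc]
    rw [Finset.card_image_of_injOn (by exact_mod_cast rk_injOn S)]
    omega

lemma rk_surj {S : Finset ℕ} {i : ℕ} (hi : i ∈ Finset.Icc 1 S.card) :
    ∃ v ∈ S, rk S v = i := by
  have := (rk_image S) ▸ hi
  obtain ⟨v, hv, hvi⟩ := Finset.mem_image.1 this
  exact ⟨v, hv, hvi⟩

/-- inverse of `rk S` on `Icc 1 S.card`. -/
def unr (S : Finset ℕ) (i : ℕ) : ℕ :=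
  if h : ∃ v ∈ S, rk S v = i then h.choose else 0

lemma unr_spec {S : Finset ℕ} {i : ℕ} (hi : i ∈ Finset.Icc 1 S.card) :
    unr S i ∈ S ∧ rk S (unr S i) = i := by
  have h : ∃ v ∈ S, rk S v = i := rk_surj hi
  rw [unr, dif_pos h]
  exact ⟨h.choose_spec.1, h.choose_spec.2⟩

lemma unr_mem {S : Finset ℕ} {i : ℕ} (hi : i ∈ Finset.Icc 1 S.card) : unr S i ∈ S :=
  (unr_spec hi).1

lemma rk_unr {S : Finset ℕ} {i : ℕ} (hi : i ∈ Finset.Icc 1 S.card) : rk S (unr S i) = i :=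
  (unr_spec hi).2

lemma unr_rk {S : Finset ℕ} {v : ℕ} (hv : v ∈ S) : unr S (rk S v) = v := by
  have hi := rk_mem hv
  exact rk_injOn S (unr_mem hi) hv (rk_unr hi)

lemma unr_strictMonoOn (S : Finset ℕ) : StrictMonoOn (unr S) ↑(Finset.Icc 1 S.card) := by
  intro i hi j hj hij
  simp only [Finset.coe_Icc] at hi hj
  have hi' : i ∈ Finset.Icc 1 S.card := by simpa using hi
  have hj' : j ∈ Finset.Icc 1 S.card := by simpa using hj
  by_contra h
  push_neg at h
  rcases h.lt_or_eq with h | h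
  · have := rk_strictMonoOn S (unr_mem hj') (unr_mem hi') h
    rw [rk_unr hi', rk_unr hj'] at this; omega
  · have : rk S (unr S j) = rk S (unr S i) := by rw [h]
    rw [rk_unr hi', rk_unr hj'] at this; omega

/-- Key: a strictly monotone map with image `B` computes ranks. -/
lemma rk_image_eq {A B : Finset ℕ} {f : ℕ → ℕ} (hf : StrictMonoOn f ↑A)
    (hB : A.image f = B) {a : ℕ} (ha : a ∈ A) : rk B (f a) = rk A a := by
  have : B.filter (· ≤ f a) = (A.filter (· ≤ a)).image f := by
    ext b
    simp only [Finset.mem_filter, Finset.mem_image, ← hB]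
    constructor
    · rintro ⟨⟨x, hx, rfl⟩, hle⟩
      refine ⟨x, ⟨hx, ?_⟩, rfl⟩
      by_contra h; push_neg at h
      exact absurd (hf ha hx h) (by omega)
    · rintro ⟨x, ⟨hx, hxa⟩, rfl⟩
      refine ⟨⟨x, hx, rfl⟩, ?_⟩
      rcases hxa.lt_or_eq with h | h
      · exact (hf hx ha h).le
      · rw [h]
  rw [rk, this, Finset.card_image_of_injOn (hf.injOn.mono (Finset.coe_subset.2 (Finset.filter_subset _ _)))]
  rfl

lemma strictMonoOn_eq_unr {A B : Finset ℕ} {f : ℕ → ℕ} (hf : StrictMonoOn f ↑A)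
    (hB : A.image f = B) {a : ℕ} (ha : a ∈ A) : f a = unr B (rk A a) := by
  have hfa : f a ∈ B := hB ▸ Finset.mem_image_of_mem f ha
  rw [← rk_image_eq hf hB ha, unr_rk hfa]

variable (μ α : YoungDiagram)

/-- standardization of a partial tableau -/
def std (f : ℕ × ℕ → ℕ) (x : ℕ × ℕ) : ℕ :=
  if x ∈ cellsOf μ α then rk ((cellsOf μ α).image f) (f x) else 0

/-- destandardization into value set `S` -/
def dst (S : Finset ℕ) (g : ℕ × ℕ → ℕ) (x : ℕ × ℕ) : ℕ :=
  if x ∈ cellsOf μ α then unr S (g x) else 0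

lemma card_image_tab {f : ℕ × ℕ → ℕ} (hf : IsPartialTab μ α f) :
    ((cellsOf μ α).image f).card = (cellsOf μ α).card :=
  Finset.card_image_of_injOn hf.2.1

lemma std_mem {f : ℕ × ℕ → ℕ} (hf : IsPartialTab μ α f) {x : ℕ × ℕ}
    (hx : x ∈ cellsOf μ α) :
    std μ α f x ∈ Finset.Icc 1 (cellsOf μ α).card := by
  rw [std, if_pos hx, ← card_image_tab μ α hf]
  exact rk_mem (Finset.mem_image_of_mem f hx)

lemma std_isSYT {f : ℕ × ℕ → ℕ} (hf : IsPartialTab μ α f) :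
    IsSkewSYT μ α (std μ α f) := by
  obtain ⟨h0, hinj, hmono⟩ := hf
  have hV := card_image_tab μ α ⟨h0, hinj, hmono⟩
  refine ⟨fun x hx => by rw [std, if_neg hx], ⟨?_, ?_, ?_⟩, ?_⟩
  · intro x hx
    have := std_mem μ α ⟨h0, hinj, hmono⟩ hx
    simpa [Set.mem_Icc] using (Finset.mem_Icc.1 this)
  · intro x hx y hy hxy
    rw [Finset.mem_coe] at hx hy
    rw [std, if_pos hx, std, if_pos hy] at hxy
    exact hinj hx hy (rk_injOn _ (Finset.mem_coe.2 (Finset.mem_image_of_mem f hx))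
      (Finset.mem_coe.2 (Finset.mem_image_of_mem f hy)) hxy)
  · intro i hi
    rw [Set.mem_Icc] at hi
    have : i ∈ Finset.Icc 1 ((cellsOf μ α).image f).card := by
      rw [hV]; exact Finset.mem_Icc.2 ⟨hi.1, hi.2⟩
    obtain ⟨v, hv, hvi⟩ := rk_surj this
    obtain ⟨x, hx, rfl⟩ := Finset.mem_image.1 hv
    exact ⟨x, hx, by rw [std, if_pos hx]; exact hvi⟩
  · intro x hx y hy hxy
    rw [std, if_pos hx, std, if_pos hy]
    exact rk_strictMonoOn _ (Finset.mem_coe.2 (Finset.mem_image_of_mem f hx))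
      (Finset.mem_coe.2 (Finset.mem_image_of_mem f hy)) (hmono x hx y hy hxy)

lemma dst_mem {g : ℕ × ℕ → ℕ} (hg : IsSkewSYT μ α g) {S : Finset ℕ}
    (hS : S.card = (cellsOf μ α).card) {x : ℕ × ℕ} (hx : x ∈ cellsOf μ α) :
    g x ∈ Finset.Icc 1 S.card := by
  rw [hS, Finset.mem_Icc]
  have := hg.2.1.1 hx
  rwa [Set.mem_Icc] at this

lemma dst_isTab {g : ℕ × ℕ → ℕ} (hg : IsSkewSYT μ α g) {S : Finset ℕ}
    (hS : S.card = (cellsOf μ α).card) : IsPartialTab μ α (dst μ α S g) := by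
  obtain ⟨h0, hbij, hmono⟩ := hg
  refine ⟨fun x hx => by rw [dst, if_neg hx], ?_, ?_⟩
  · intro x hx y hy hxy
    rw [Finset.mem_coe] at hx hy
    rw [dst, if_pos hx, dst, if_pos hy] at hxy
    have h1 := rk_unr (dst_mem μ α ⟨h0, hbij, hmono⟩ hS hx)
    have h2 := rk_unr (dst_mem μ α ⟨h0, hbij, hmono⟩ hS hy)
    have : g x = g y := by rw [← h1, ← h2, hxy]
    exact hbij.2.1 hx hy this
  · intro x hx y hy hxy
    rw [dst, if_pos hx, dst, if_pos hy]
    exact unr_strictMonoOn S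
      (Finset.mem_coe.2 (dst_mem μ α ⟨h0, hbij, hmono⟩ hS hx))
      (Finset.mem_coe.2 (dst_mem μ α ⟨h0, hbij, hmono⟩ hS hy))
      (hmono x hx y hy hxy)

lemma dst_image {g : ℕ × ℕ → ℕ} (hg : IsSkewSYT μ α g) {S : Finset ℕ}
    (hS : S.card = (cellsOf μ α).card) :
    (cellsOf μ α).image (dst μ α S g) = S := by
  apply Finset.eq_of_subset_of_card_le
  · intro v hv
    obtain ⟨x, hx, rfl⟩ := Finset.mem_image.1 hv
    rw [dst, if_pos hx]
    exact unr_mem (dst_mem μ α hg hS hx)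
  · rw [Finset.card_image_of_injOn (dst_isTab μ α hg hS).2.1, hS]

lemma dst_std {f : ℕ × ℕ → ℕ} (hf : IsPartialTab μ α f) :
    dst μ α ((cellsOf μ α).image f) (std μ α f) = f := by
  funext x
  by_cases hx : x ∈ cellsOf μ α
  · rw [dst, if_pos hx, std, if_pos hx, unr_rk (Finset.mem_image_of_mem f hx)]
  · rw [dst, if_neg hx, hf.1 x hx]

lemma std_dst {g : ℕ × ℕ → ℕ} (hg : IsSkewSYT μ α g) {S : Finset ℕ}
    (hS : S.card = (cellsOf μ α).card) :
    std μ α (dst μ α S g) = g := by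
  funext x
  by_cases hx : x ∈ cellsOf μ α
  · rw [std, if_pos hx, dst_image μ α hg hS, dst, if_pos hx,
      rk_unr (dst_mem μ α hg hS hx)]
  · rw [std, if_neg hx, hg.1 x hx]

lemma tabSign_std {f : ℕ × ℕ → ℕ} (hf : IsPartialTab μ α f) :
    tabSign μ α (std μ α f) = tabSign μ α f := by
  unfold tabSign
  congr 2
  apply Finset.filter_congr
  intro p hp
  rw [Finset.mem_product] at hp
  have h1 : f p.1 ∈ ((cellsOf μ α).image f : Finset ℕ) := Finset.mem_image_of_mem f hp.1
  have h2 : f p.2 ∈ ((cellsOf μ α).image f : Finset ℕ) := Finset.mem_image_of_mem f hp.2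
  simp only [std, if_pos hp.1, if_pos hp.2]
  rw [(rk_strictMonoOn _).lt_iff_lt (Finset.mem_coe.2 h2) (Finset.mem_coe.2 h1)]

noncomputable def comp (n : ℕ) (P : Finset (ℕ × ℕ)) (a : ℕ) : ℕ :=
  if h : ∃ p ∈ P, p.1 = a then h.choose.2
  else if a ∈ Finset.Icc 1 n then
    unr (Finset.Icc 1 n \ P.image Prod.snd) (rk (Finset.Icc 1 n \ P.image Prod.fst) a)
  else a

section Comp
variable {n : ℕ} {P : Finset (ℕ × ℕ)}

lemma comp_top (hP : IsPPerm n P) {p : ℕ × ℕ} (hp : p ∈ P) : comp n P p.1 = p.2 := by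
  have h : ∃ q ∈ P, q.1 = p.1 := ⟨p, hp, rfl⟩
  rw [comp, dif_pos h]
  exact congrArg Prod.snd (hP.2.1 _ h.choose_spec.1 p hp h.choose_spec.2)

lemma tops_subset (hP : IsPPerm n P) : P.image Prod.fst ⊆ Finset.Icc 1 n :=
  fun a ha => by obtain ⟨p, hp, rfl⟩ := Finset.mem_image.1 ha; exact (hP.1 p hp).1

lemma bots_subset (hP : IsPPerm n P) : P.image Prod.snd ⊆ Finset.Icc 1 n :=
  fun a ha => by obtain ⟨p, hp, rfl⟩ := Finset.mem_image.1 ha; exact (hP.1 p hp).2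

lemma AB_card (hP : IsPPerm n P) :
    (Finset.Icc 1 n \ P.image Prod.fst).card = (Finset.Icc 1 n \ P.image Prod.snd).card := by
  rw [Finset.card_sdiff_of_subset (tops_subset hP), Finset.card_sdiff_of_subset (bots_subset hP),
    Finset.card_image_of_injOn, Finset.card_image_of_injOn]
  · intro p hp q hq h; exact hP.2.2 p hp q hq h
  · intro p hp q hq h; exact hP.2.1 p hp q hq h

lemma comp_A {a : ℕ} (ha : a ∈ Finset.Icc 1 n \ P.image Prod.fst) :
    comp n P a = unr (Finset.Icc 1 n \ P.image Prod.snd)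
      (rk (Finset.Icc 1 n \ P.image Prod.fst) a) := by
  rw [Finset.mem_sdiff] at ha
  have h : ¬∃ p ∈ P, p.1 = a := by
    rintro ⟨p, hp, rfl⟩; exact ha.2 (Finset.mem_image_of_mem _ hp)
  rw [comp, dif_neg h, if_pos ha.1]

lemma comp_mem_B (hP : IsPPerm n P) {a : ℕ} (ha : a ∈ Finset.Icc 1 n \ P.image Prod.fst) :
    comp n P a ∈ Finset.Icc 1 n \ P.image Prod.snd := by
  rw [comp_A ha]
  apply unr_mem
  rw [← AB_card hP]
  exact rk_mem ha

lemma comp_strictMonoOn (hP : IsPPerm n P) :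
    StrictMonoOn (comp n P) ↑(Finset.Icc 1 n \ P.image Prod.fst) := by
  intro a ha b hb hab
  rw [Finset.mem_coe] at ha hb
  rw [comp_A ha, comp_A hb]
  apply unr_strictMonoOn
  · rw [← AB_card hP]; exact rk_mem ha
  · rw [← AB_card hP]; exact rk_mem hb
  · exact rk_strictMonoOn _ ha hb hab

lemma comp_image_A (hP : IsPPerm n P) :
    (Finset.Icc 1 n \ P.image Prod.fst).image (comp n P) =
      Finset.Icc 1 n \ P.image Prod.snd := by
  apply Finset.eq_of_subset_of_card_le
  · intro b hb
    obtain ⟨a, ha, rfl⟩ := Finset.mem_image.1 hb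
    exact comp_mem_B hP ha
  · rw [Finset.card_image_of_injOn (comp_strictMonoOn hP).injOn, AB_card hP]

lemma comp_image_tops (hP : IsPPerm n P) : (P.image Prod.fst).image (comp n P) = P.image Prod.snd := by
  rw [Finset.image_image]
  exact Finset.image_congr (fun p hp => comp_top hP hp)

lemma comp_id (hP : IsPPerm n P) {a : ℕ} (ha : a ∉ Finset.Icc 1 n) : comp n P a = a := by
  have h : ¬∃ p ∈ P, p.1 = a := by
    rintro ⟨p, hp, rfl⟩; exact ha (hP.1 p hp).1
  rw [comp, dif_neg h, if_neg ha]

lemma comp_bijOn (hP : IsPPerm n P) :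
    Set.BijOn (comp n P) ↑(Finset.Icc 1 n) ↑(Finset.Icc 1 n) := by
  have hmaps : ∀ a ∈ Finset.Icc 1 n, comp n P a ∈ Finset.Icc 1 n := by
    intro a ha
    by_cases h : a ∈ P.image Prod.fst
    · obtain ⟨p, hp, rfl⟩ := Finset.mem_image.1 h
      rw [comp_top hP hp]; exact (hP.1 p hp).2
    · exact (Finset.mem_sdiff.1 (comp_mem_B hP (Finset.mem_sdiff.2 ⟨ha, h⟩))).1
  have hinj : Set.InjOn (comp n P) ↑(Finset.Icc 1 n) := by
    intro a ha b hb hab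
    rw [Finset.mem_coe] at ha hb
    by_cases h1 : a ∈ P.image Prod.fst <;> by_cases h2 : b ∈ P.image Prod.fst
    · obtain ⟨p, hp, rfl⟩ := Finset.mem_image.1 h1
      obtain ⟨q, hq, rfl⟩ := Finset.mem_image.1 h2
      rw [comp_top hP hp, comp_top hP hq] at hab
      exact congrArg Prod.fst (hP.2.2 p hp q hq hab)
    · exfalso
      obtain ⟨p, hp, rfl⟩ := Finset.mem_image.1 h1
      have hbB := comp_mem_B hP (Finset.mem_sdiff.2 ⟨hb, h2⟩)
      rw [← hab, comp_top hP hp] at hbB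
      exact (Finset.mem_sdiff.1 hbB).2 (Finset.mem_image_of_mem _ hp)
    · exfalso
      obtain ⟨q, hq, rfl⟩ := Finset.mem_image.1 h2
      have haB := comp_mem_B hP (Finset.mem_sdiff.2 ⟨ha, h1⟩)
      rw [hab, comp_top hP hq] at haB
      exact (Finset.mem_sdiff.1 haB).2 (Finset.mem_image_of_mem _ hq)
    · exact (comp_strictMonoOn hP).injOn
        (Finset.mem_coe.2 (Finset.mem_sdiff.2 ⟨ha, h1⟩))
        (Finset.mem_coe.2 (Finset.mem_sdiff.2 ⟨hb, h2⟩)) hab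
  have himg : (Finset.Icc 1 n).image (comp n P) = Finset.Icc 1 n := by
    apply Finset.eq_of_subset_of_card_le
    · intro b hb; obtain ⟨a, ha, rfl⟩ := Finset.mem_image.1 hb; exact hmaps a ha
    · rw [Finset.card_image_of_injOn (by exact_mod_cast hinj)]
  refine ⟨fun a ha => ?_, hinj, fun b hb => ?_⟩
  · exact Finset.mem_coe.2 (hmaps a (Finset.mem_coe.1 ha))
  · rw [Finset.mem_coe, ← himg] at hb
    obtain ⟨a, ha, rfl⟩ := Finset.mem_image.1 hb
    exact ⟨a, Finset.mem_coe.2 ha, rfl⟩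

end Comp

lemma sdiff_of_union_disjoint {s t u : Finset ℕ} (hd : Disjoint s t) (hu : s ∪ t = u) :
    u \ s = t := by
  subst hu
  ext a
  simp only [Finset.mem_sdiff, Finset.mem_union]
  constructor
  · rintro ⟨h1 | h1, h2⟩
    · exact absurd h1 h2
    · exact h1
  · intro h
    exact ⟨Or.inr h, fun hs => Finset.disjoint_left.1 hd hs h⟩

noncomputable def Fmap (n : ℕ) (μ α : YoungDiagram)
    (x : Finset (ℕ × ℕ) × (ℕ × ℕ → ℕ) × (ℕ × ℕ → ℕ)) :
    (ℕ → ℕ) × Finset ℕ × (ℕ × ℕ → ℕ) × (ℕ × ℕ → ℕ) :=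
  (comp n x.1, Finset.Icc 1 n \ x.1.image Prod.fst, std μ α x.2.1, std μ α x.2.2)

noncomputable def Gmap (n : ℕ) (μ α : YoungDiagram)
    (y : (ℕ → ℕ) × Finset ℕ × (ℕ × ℕ → ℕ) × (ℕ × ℕ → ℕ)) :
    Finset (ℕ × ℕ) × (ℕ × ℕ → ℕ) × (ℕ × ℕ → ℕ) :=
  ((Finset.Icc 1 n \ y.2.1).image (fun a => (a, y.1 a)),
   dst μ α (Finset.Icc 1 n \ (Finset.Icc 1 n \ y.2.1).image y.1) y.2.2.1,
   dst μ α y.2.1 y.2.2.2)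

section Main
variable {n : ℕ} {μ α : YoungDiagram}

lemma F_quad {x} (hx : TripleProp n μ α x) : QuadProp n μ α (Fmap n μ α x) := by
  obtain ⟨hP, hT, hU, hd1, hu1, hd2, hu2⟩ := hx
  have hA : Finset.Icc 1 n \ x.1.image Prod.fst = (cellsOf μ α).image x.2.2 :=
    sdiff_of_union_disjoint hd2 hu2
  refine ⟨comp_bijOn hP, fun a ha => comp_id hP ha, ?_, ?_, comp_strictMonoOn hP,
    std_isSYT μ α hT, std_isSYT μ α hU⟩
  · exact Finset.coe_subset.2 (Finset.sdiff_subset)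
  · show (Finset.Icc 1 n \ x.1.image Prod.fst).card = _
    rw [hA, card_image_tab μ α hU]

lemma G_pperm {y : (ℕ → ℕ) × Finset ℕ × (ℕ × ℕ → ℕ) × (ℕ × ℕ → ℕ)}
    (hy : QuadProp n μ α y) :
    IsPPerm n ((Finset.Icc 1 n \ y.2.1).image (fun a => (a, y.1 a))) := by
  obtain ⟨hbij, hid, hIsub, hIcard, hImono, hT, hU⟩ := hy
  refine ⟨?_, ?_, ?_⟩
  · rintro p hp
    obtain ⟨a, ha, rfl⟩ := Finset.mem_image.1 hp
    have haI : a ∈ Finset.Icc 1 n := Finset.sdiff_subset ha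
    exact ⟨haI, Finset.mem_coe.1 (hbij.1 (Finset.mem_coe.2 haI))⟩
  · rintro p hp q hq h
    obtain ⟨a, _, rfl⟩ := Finset.mem_image.1 hp
    obtain ⟨b, _, rfl⟩ := Finset.mem_image.1 hq
    simp only at h
    subst h; rfl
  · rintro p hp q hq h
    obtain ⟨a, ha, rfl⟩ := Finset.mem_image.1 hp
    obtain ⟨b, hb, rfl⟩ := Finset.mem_image.1 hq
    simp only at h
    have : a = b := hbij.2.1
      (Finset.mem_coe.2 (Finset.sdiff_subset ha))
      (Finset.mem_coe.2 (Finset.sdiff_subset hb)) h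
    subst this; rfl

lemma G_fst {y : (ℕ → ℕ) × Finset ℕ × (ℕ × ℕ → ℕ) × (ℕ × ℕ → ℕ)} :
    ((Finset.Icc 1 n \ y.2.1).image (fun a => (a, y.1 a))).image Prod.fst
      = Finset.Icc 1 n \ y.2.1 := by
  rw [Finset.image_image]
  exact Finset.image_id

lemma G_snd {y : (ℕ → ℕ) × Finset ℕ × (ℕ × ℕ → ℕ) × (ℕ × ℕ → ℕ)} :
    ((Finset.Icc 1 n \ y.2.1).image (fun a => (a, y.1 a))).image Prod.snd
      = (Finset.Icc 1 n \ y.2.1).image y.1 := by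
  rw [Finset.image_image]
  rfl

lemma G_facts {y : (ℕ → ℕ) × Finset ℕ × (ℕ × ℕ → ℕ) × (ℕ × ℕ → ℕ)}
    (hy : QuadProp n μ α y) :
    ((Finset.Icc 1 n \ y.2.1).image y.1 ⊆ Finset.Icc 1 n) ∧
    (Finset.Icc 1 n \ (Finset.Icc 1 n \ y.2.1).image y.1).card = (cellsOf μ α).card ∧
    y.2.1.image y.1 = Finset.Icc 1 n \ (Finset.Icc 1 n \ y.2.1).image y.1 := by
  obtain ⟨hbij, hid, hIsub, hIcard, hImono, hT, hU⟩ := hy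
  have hIcc : y.2.1 ⊆ Finset.Icc 1 n := by exact_mod_cast hIsub
  have hsub : (Finset.Icc 1 n \ y.2.1).image y.1 ⊆ Finset.Icc 1 n := by
    intro b hb
    obtain ⟨a, ha, rfl⟩ := Finset.mem_image.1 hb
    exact Finset.mem_coe.1 (hbij.1 (Finset.mem_coe.2 (Finset.sdiff_subset ha)))
  have hJcard : ((Finset.Icc 1 n \ y.2.1).image y.1).card = (Finset.Icc 1 n \ y.2.1).card :=
    Finset.card_image_of_injOn (hbij.2.1.mono (Finset.coe_subset.2 Finset.sdiff_subset))
  have hkn : (cellsOf μ α).card ≤ (Finset.Icc 1 n).card :=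
    hIcard ▸ Finset.card_le_card hIcc
  have hScard : (Finset.Icc 1 n \ (Finset.Icc 1 n \ y.2.1).image y.1).card
      = (cellsOf μ α).card := by
    rw [Finset.card_sdiff_of_subset hsub, hJcard, Finset.card_sdiff_of_subset hIcc, hIcard]
    omega
  refine ⟨hsub, hScard, ?_⟩
  apply Finset.eq_of_subset_of_card_le
  · intro b hb
    obtain ⟨a, ha, rfl⟩ := Finset.mem_image.1 hb
    rw [Finset.mem_sdiff]
    refine ⟨Finset.mem_coe.1 (hbij.1 (hIsub (Finset.mem_coe.2 ha))), ?_⟩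
    intro hmem
    obtain ⟨b, hb', hba⟩ := Finset.mem_image.1 hmem
    have : b = a := hbij.2.1 (Finset.mem_coe.2 (Finset.sdiff_subset hb'))
      (hIsub (Finset.mem_coe.2 ha)) hba
    subst this
    exact (Finset.mem_sdiff.1 hb').2 ha
  · rw [hScard, Finset.card_image_of_injOn (hbij.2.1.mono hIsub), hIcard]

lemma G_trip {y} (hy : QuadProp n μ α y) : TripleProp n μ α (Gmap n μ α y) := by
  obtain ⟨hsub, hScard, hIimg⟩ := G_facts hy
  obtain ⟨hbij, hid, hIsub, hIcard, hImono, hT, hU⟩ := hy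
  have hIcc : y.2.1 ⊆ Finset.Icc 1 n := by exact_mod_cast hIsub
  refine ⟨G_pperm ⟨hbij, hid, hIsub, hIcard, hImono, hT, hU⟩,
    dst_isTab μ α hT hScard, dst_isTab μ α hU hIcard, ?_, ?_, ?_, ?_⟩
  · simp only [Gmap]
    rw [G_snd, dst_image μ α hT hScard]
    exact Finset.disjoint_sdiff
  · simp only [Gmap]
    rw [G_snd, dst_image μ α hT hScard]
    exact Finset.union_sdiff_of_subset hsub
  · simp only [Gmap]
    rw [G_fst, dst_image μ α hU hIcard]
    exact Finset.sdiff_disjoint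
  · simp only [Gmap]
    rw [G_fst, dst_image μ α hU hIcard]
    exact Finset.sdiff_union_of_subset hIcc

lemma GF {x} (hx : TripleProp n μ α x) : Gmap n μ α (Fmap n μ α x) = x := by
  obtain ⟨P, T, U⟩ := x
  obtain ⟨hP, hT, hU, hd1, hu1, hd2, hu2⟩ := hx
  simp only at hP hT hU hd1 hu1 hd2 hu2
  have h1 : Finset.Icc 1 n \ (Finset.Icc 1 n \ P.image Prod.fst) = P.image Prod.fst :=
    sdiff_of_union_disjoint Finset.sdiff_disjoint
      (Finset.sdiff_union_of_subset (tops_subset hP))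
  have h2 : (P.image Prod.fst).image (fun a => (a, comp n P a)) = P := by
    ext p
    simp only [Finset.mem_image]
    constructor
    · rintro ⟨a, ha, rfl⟩
      obtain ⟨q, hq, rfl⟩ := ha
      rw [comp_top hP hq]
      simpa using hq
    · intro hp
      exact ⟨p.1, ⟨p, hp, rfl⟩, by rw [comp_top hP hp]⟩
  have h4 : Finset.Icc 1 n \ P.image Prod.snd = (cellsOf μ α).image T :=
    sdiff_of_union_disjoint hd1 hu1
  have h5 : Finset.Icc 1 n \ P.image Prod.fst = (cellsOf μ α).image U :=
    sdiff_of_union_disjoint hd2 hu2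
  show (_, _, _) = (P, T, U)
  simp only [Gmap, Fmap]
  rw [h1, h2, comp_image_tops hP, h4, h5, dst_std μ α hT, dst_std μ α hU]

lemma FG {y} (hy : QuadProp n μ α y) : Fmap n μ α (Gmap n μ α y) = y := by
  obtain ⟨σ, I, Tt, Ut⟩ := y
  have hPP : IsPPerm n ((Finset.Icc 1 n \ I).image (fun a => (a, σ a))) := G_pperm hy
  obtain ⟨hsub, hScard, hIimg⟩ := G_facts hy
  obtain ⟨hbij, hid, hIsub, hIcard, hImono, hT, hU⟩ := hy
  simp only at hsub hScard hIimg hbij hid hIsub hIcard hImono hT hU hPP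
  have hIcc : I ⊆ Finset.Icc 1 n := by exact_mod_cast hIsub
  have hfst : ((Finset.Icc 1 n \ I).image (fun a => (a, σ a))).image Prod.fst
      = Finset.Icc 1 n \ I := G_fst (y := (σ, I, Tt, Ut))
  have hsnd : ((Finset.Icc 1 n \ I).image (fun a => (a, σ a))).image Prod.snd
      = (Finset.Icc 1 n \ I).image σ := G_snd (y := (σ, I, Tt, Ut))
  have hA' : Finset.Icc 1 n \ (Finset.Icc 1 n \ I) = I :=
    sdiff_of_union_disjoint Finset.sdiff_disjoint (Finset.sdiff_union_of_subset hIcc)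
  have hσ : comp n ((Finset.Icc 1 n \ I).image (fun a => (a, σ a))) = σ := by
    funext a
    by_cases haI : a ∈ Finset.Icc 1 n
    · by_cases haI2 : a ∈ I
      · have ha : a ∈ Finset.Icc 1 n \ ((Finset.Icc 1 n \ I).image
            (fun a => (a, σ a))).image Prod.fst := by
          rw [hfst, hA']; exact haI2
        rw [comp_A ha, hsnd, hfst, hA']
        exact (strictMonoOn_eq_unr hImono hIimg haI2).symm
      · have hp : (a, σ a) ∈ (Finset.Icc 1 n \ I).image (fun a => (a, σ a)) :=
          Finset.mem_image_of_mem _ (Finset.mem_sdiff.2 ⟨haI, haI2⟩)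
        exact comp_top hPP hp
    · rw [comp_id hPP haI, hid a haI]
  show (_, _, _, _) = (σ, I, Tt, Ut)
  simp only [Fmap, Gmap]
  rw [hσ, hfst, hA', std_dst μ α hT hScard, std_dst μ α hU hIcard]

end Main

end
end SS17Aux

/-- Sagan–Stanley-type bijection between partial-tableau triples and
standard-tableau quadruples, with `π̃ = π̄` and signs preserved. -/

theorem stmt17 (n : ℕ) (μ α : YoungDiagram) (hμα : μ ≤ α) :
    ∃ e : {x : Finset (ℕ × ℕ) × (ℕ × ℕ → ℕ) × (ℕ × ℕ → ℕ) // TripleProp n μ α x} ≃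
          {y : (ℕ → ℕ) × Finset ℕ × (ℕ × ℕ → ℕ) × (ℕ × ℕ → ℕ) // QuadProp n μ α y},
      ∀ x, ((∀ p ∈ x.1.1, (e x).1.1 p.1 = p.2) ∧
            StrictMonoOn (e x).1.1 {a | a ∈ Finset.Icc 1 n ∧ ∀ p ∈ x.1.1, a ≠ p.1}) ∧
           tabSign μ α (e x).1.2.2.1 = tabSign μ α x.1.2.1 ∧
           tabSign μ α (e x).1.2.2.2 = tabSign μ α x.1.2.2 := by
  refine ⟨⟨fun x => ⟨Fmap n μ α x.1, F_quad x.2⟩, fun y => ⟨Gmap n μ α y.1, G_trip y.2⟩,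
    fun x => Subtype.ext (GF x.2), fun y => Subtype.ext (FG y.2)⟩, ?_⟩
  intro x
  obtain ⟨⟨P, T, U⟩, hx⟩ := x
  obtain ⟨hP, hT, hU, -, -, -, -⟩ := hx
  refine ⟨⟨fun p hp => comp_top hP hp, ?_⟩, tabSign_std μ α hT, tabSign_std μ α hU⟩
  have hset : {a | a ∈ Finset.Icc 1 n ∧ ∀ p ∈ P, a ≠ p.1}
      = ↑(Finset.Icc 1 n \ P.image Prod.fst) := by
    ext a
    simp only [Set.mem_setOf_eq, Finset.coe_sdiff, Set.mem_diff, Finset.mem_coe,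
      Finset.mem_image]
    constructor
    · rintro ⟨h1, h2⟩
      exact ⟨h1, fun hmem => by obtain ⟨p, hp, rfl⟩ := hmem; exact h2 p hp rfl⟩
    · rintro ⟨h1, h2⟩
      exact ⟨h1, fun p hp hap => h2 ⟨p, hp, hap.symm⟩⟩
  show StrictMonoOn (comp n P) _
  rw [hset]
  exact comp_strictMonoOn hP
end
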